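/- arXiv:2012.03686 — 10 statements merged into one kernel-verified Lean document; each statement's English description precedes it below -/
import Mathlib

section
/- Let G be a graph that does not contain K_{ℓ,ℓ} as a subgraph. Let U_1,…,U_r be pairwise disjoint sets of vertices, each of size at least ℓ·p. If the number of vertices outside U_1∪…∪U_r exceeds r·(ℓ−1), then there exists a vertex outside U_1∪…∪U_r that has at least p non-neighbors in each of the sets U_1,…,U_r. -/
/-- `G` contains `K_{ℓ,ℓ}` as a (not necessarily induced) subgraph. -/
def ContainsKll {V : Type*} (G : SimpleGraph V) (ℓ : ℕ) : Prop :=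
  ∃ A B : Finset V, Disjoint A B ∧ A.card = ℓ ∧ B.card = ℓ ∧
    ∀ a ∈ A, ∀ b ∈ B, G.Adj a b

theorem stmt1 {V : Type*} [Fintype V] [DecidableEq V] (G : SimpleGraph V)
    [DecidableRel G.Adj] (ℓ p r : ℕ) (hℓ : 1 ≤ ℓ) (hp : 1 ≤ p) (hr : 1 ≤ r)
    (hK : ¬ ContainsKll G ℓ) (U : Fin r → Finset V)
    (hdisj : ∀ i j : Fin r, i ≠ j → Disjoint (U i) (U j))
    (hcard : ∀ i : Fin r, ℓ * p ≤ (U i).card)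
    (hout : r * (ℓ - 1) < (Finset.univ.filter (fun v => ∀ i, v ∉ U i)).card) :
    ∃ v, (∀ i, v ∉ U i) ∧ ∀ i, p ≤ ((U i).filter (fun u => ¬ G.Adj v u)).card := by
  set W : Finset V := Finset.univ.filter (fun v => ∀ i, v ∉ U i) with hW
  set bad : Fin r → Finset V :=
    fun i => W.filter (fun v => ((U i).filter (fun u => ¬ G.Adj v u)).card < p) with hbad
  have hbadcard : ∀ i, (bad i).card ≤ ℓ - 1 := by
    intro i
    by_contra h
    push_neg at h
    have hle : ℓ ≤ (bad i).card := by omega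
    obtain ⟨A, hAsub, hAcard⟩ := Finset.exists_subset_card_eq hle
    set B : Finset V := (U i).filter (fun u => ∀ a ∈ A, G.Adj a u) with hB
    -- (U i) \ B is covered by the non-neighbor sets
    have hcover : (U i) \ B ⊆ A.biUnion (fun a => (U i).filter (fun u => ¬ G.Adj a u)) := by
      intro u hu
      simp only [Finset.mem_sdiff, hB, Finset.mem_filter, not_and, Finset.mem_biUnion] at hu ⊢
      obtain ⟨hu1, hu2⟩ := hu
      have := hu2 hu1
      push_neg at this
      obtain ⟨a, ha, hna⟩ := this
      exact ⟨a, ha, hu1, hna⟩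
    have hsdiff : ((U i) \ B).card ≤ ℓ * (p - 1) := by
      calc ((U i) \ B).card ≤ (A.biUnion (fun a => (U i).filter (fun u => ¬ G.Adj a u))).card :=
            Finset.card_le_card hcover
        _ ≤ ∑ a ∈ A, ((U i).filter (fun u => ¬ G.Adj a u)).card := Finset.card_biUnion_le
        _ ≤ ∑ a ∈ A, (p - 1) := by
            apply Finset.sum_le_sum
            intro a ha
            have := hAsub ha
            simp only [hbad, Finset.mem_filter] at this
            omega
        _ = ℓ * (p - 1) := by rw [Finset.sum_const, hAcard]; ring
    have hBsub : B ⊆ U i := Finset.filter_subset _ _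
    have hBcard : ℓ ≤ B.card := by
      have h1 := Finset.card_sdiff_add_card_eq_card hBsub
      have h2 := hcard i
      have : ℓ * p = ℓ * (p - 1) + ℓ := by
        have : p - 1 + 1 = p := by omega
        nlinarith [this]
      omega
    obtain ⟨B', hB'sub, hB'card⟩ := Finset.exists_subset_card_eq hBcard
    apply hK
    refine ⟨A, B', ?_, hAcard, hB'card, ?_⟩
    · rw [Finset.disjoint_left]
      intro a haA haB'
      have h1 := hAsub haA
      simp only [hbad, hW, Finset.mem_filter, Finset.mem_univ] at h1
      exact h1.1.2 i (hBsub (hB'sub haB'))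
    · intro a ha b hb
      have := hB'sub hb
      simp only [hB, Finset.mem_filter] at this
      exact this.2 a ha
  -- union of bad sets is small
  have hunion : (Finset.univ.biUnion bad).card ≤ r * (ℓ - 1) := by
    calc (Finset.univ.biUnion bad).card ≤ ∑ i : Fin r, (bad i).card := Finset.card_biUnion_le
      _ ≤ ∑ _i : Fin r, (ℓ - 1) := Finset.sum_le_sum (fun i _ => hbadcard i)
      _ = r * (ℓ - 1) := by simp [Finset.sum_const, Finset.card_univ]
  have : ∃ v ∈ W, v ∉ Finset.univ.biUnion bad := by
    by_contra h
    push_neg at h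
    have : W ⊆ Finset.univ.biUnion bad := h
    have := Finset.card_le_card this
    omega
  obtain ⟨v, hvW, hv⟩ := this
  simp only [Finset.mem_biUnion, Finset.mem_univ, true_and, not_exists] at hv
  have hvW' : ∀ i, v ∉ U i := by
    simp only [hW, Finset.mem_filter] at hvW; exact hvW.2
  refine ⟨v, hvW', fun i => ?_⟩
  have := hv i
  simp only [hbad, Finset.mem_filter, hvW, true_and, not_lt] at this
  exact this
end

section
/- Let G be a graph that does not contain K_{ℓ,ℓ} as a subgraph, and let V_1,…,V_d be pairwise disjoint sets of vertices of G, each of size at least ℓ^{d−1}. Then there exist vertices v_1 ∈ V_1, …, v_d ∈ V_d that form an independent set in G (pairwise non-adjacent). -/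
open Finset Function

lemma Nat.mul_sub_one_lt_pow {ℓ : ℕ} (hℓ : 0 < ℓ) (n : ℕ) : n * (ℓ - 1) < ℓ ^ n := by
  have h := one_add_mul_le_pow_of_sq_nonneg (zero_le ((ℓ - 1) ^ 2)) (zero_le _) (zero_le _) n
  rw [Nat.cast_id, Nat.add_sub_cancel' (show 1 ≤ ℓ from hℓ)] at h
  omega

lemma Fin.pairwise_cons {α : Type*} {r : α → α → Prop} {n : ℕ} {a : α} {f : Fin n → α}
    (ha : ∀ i, r a (f i)) (ha' : ∀ i, r (f i) a) (hf : Pairwise (r on f)) :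
    Pairwise (r on (Fin.cons a f : Fin (n + 1) → α)) := by
  intro i j hij
  cases i using Fin.cases with
  | zero =>
    cases j using Fin.cases with
    | zero => exact absurd rfl hij
    | succ j => exact ha j
  | succ i =>
    cases j using Fin.cases with
    | zero => exact ha' i
    | succ j => exact hf (ne_of_apply_ne Fin.succ hij)

lemma containsKll_zero {V : Type*} (G : SimpleGraph V) : ContainsKll G 0 :=
  ⟨∅, ∅, disjoint_empty_left _, rfl, rfl, by simp⟩

lemma pos_of_not_containsKll {V : Type*} {G : SimpleGraph V} {ℓ : ℕ}
    (hK : ¬ ContainsKll G ℓ) : 0 < ℓ :=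
  Nat.pos_of_ne_zero fun h => hK (h ▸ containsKll_zero G)

namespace SimpleGraph

variable {V : Type*} {G : SimpleGraph V} [DecidableRel G.Adj] {ℓ : ℕ}

lemma card_filter_card_nonAdj_lt [DecidableEq V] (hK : ¬ ContainsKll G ℓ) {X Y : Finset V}
    (hXY : Disjoint X Y) {m : ℕ} (hY : ℓ * m ≤ #Y) :
    #{x ∈ X | #{y ∈ Y | ¬ G.Adj x y} < m} < ℓ := by
  by_contra! h
  obtain ⟨A, hAX, hA⟩ := exists_subset_card_eq h
  set C := {y ∈ Y | ∀ a ∈ A, G.Adj a y}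
  have hcover : Y \ C ⊆ A.biUnion fun a => {y ∈ Y | ¬ G.Adj a y} := by
    intro y hy
    simp only [C, mem_sdiff, mem_filter, not_and, not_forall] at hy
    obtain ⟨a, ha, hna⟩ := hy.2 hy.1
    exact mem_biUnion.2 ⟨a, ha, mem_filter.2 ⟨hy.1, hna⟩⟩
  have hC : ℓ ≤ #C := by
    have hsum : #(Y \ C) + ℓ ≤ ℓ * m :=
      calc #(Y \ C) + ℓ ≤ ∑ a ∈ A, (#{y ∈ Y | ¬ G.Adj a y} + 1) := by
            rw [sum_add_distrib, sum_const, hA, smul_eq_mul, mul_one]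
            gcongr
            exact (card_le_card hcover).trans card_biUnion_le
        _ ≤ ∑ _a ∈ A, m := sum_le_sum fun a ha => (mem_filter.1 (hAX ha)).2
        _ = ℓ * m := by rw [sum_const, hA, smul_eq_mul]
    have := card_sdiff_add_card_eq_card (s := C) (filter_subset _ Y)
    omega
  obtain ⟨B, hBC, hB⟩ := exists_subset_card_eq hC
  exact hK ⟨A, B, hXY.mono (hAX.trans (filter_subset _ _)) (hBC.trans (filter_subset _ _)),
    hA, hB, fun a ha b hb => (mem_filter.1 (hBC hb)).2 a ha⟩

lemma exists_mem_forall_le_card_nonAdj [DecidableEq V] (hK : ¬ ContainsKll G ℓ)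
    {ι : Type*} [Fintype ι] {X : Finset V} {Ys : ι → Finset V} (hXY : ∀ i, Disjoint X (Ys i))
    {m : ℕ} (hY : ∀ i, ℓ * m ≤ #(Ys i)) (hX : Fintype.card ι * (ℓ - 1) < #X) :
    ∃ x ∈ X, ∀ i, m ≤ #{y ∈ Ys i | ¬ G.Adj x y} := by
  set bad := univ.biUnion fun i => {x ∈ X | #{y ∈ Ys i | ¬ G.Adj x y} < m}
  have hbad : #bad < #X :=
    calc #bad ≤ ∑ i, #{x ∈ X | #{y ∈ Ys i | ¬ G.Adj x y} < m} := card_biUnion_le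
      _ ≤ ∑ _i : ι, (ℓ - 1) := sum_le_sum fun i _ =>
            Nat.le_sub_one_of_lt (card_filter_card_nonAdj_lt hK (hXY i) (hY i))
      _ < #X := by rwa [sum_const, card_univ, smul_eq_mul]
  obtain ⟨x, hxX, hxbad⟩ := exists_mem_notMem_of_card_lt_card hbad
  refine ⟨x, hxX, fun i => ?_⟩
  by_contra! hlt
  exact hxbad (mem_biUnion.2 ⟨i, mem_univ i, mem_filter.2 ⟨hxX, hlt⟩⟩)

theorem exists_independent_transversal [DecidableEq V] (hK : ¬ ContainsKll G ℓ) {n : ℕ}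
    (Vs : Fin (n + 1) → Finset V) (hdisj : Pairwise (Disjoint on Vs))
    (hcard : ∀ i, ℓ ^ n ≤ #(Vs i)) :
    ∃ v : Fin (n + 1) → V, (∀ i, v i ∈ Vs i) ∧ Pairwise fun i j => ¬ G.Adj (v i) (v j) := by
  induction n with
  | zero =>
    obtain ⟨x, hx⟩ := card_pos.1 (hcard 0)
    exact ⟨fun _ => x, fun i => Fin.eq_zero i ▸ hx,
      fun i j hij => absurd (Subsingleton.elim (α := Fin 1) i j) hij⟩
  | succ n ih =>
    have hX : Fintype.card (Fin (n + 1)) * (ℓ - 1) < #(Vs 0) := by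
      rw [Fintype.card_fin]
      exact (Nat.mul_sub_one_lt_pow (pos_of_not_containsKll hK) _).trans_le (hcard 0)
    obtain ⟨x, hx, hxW⟩ := exists_mem_forall_le_card_nonAdj hK
      (fun i => hdisj (Fin.succ_ne_zero i).symm)
      (fun i => (pow_succ' ℓ n).symm.trans_le (hcard i.succ)) hX
    set Ws := fun i : Fin (n + 1) => {y ∈ Vs i.succ | ¬ G.Adj x y}
    have hWdisj : Pairwise (Disjoint on Ws) := fun i j hij =>
      (hdisj ((Fin.succ_injective _).ne hij)).mono (filter_subset _ _) (filter_subset _ _)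
    obtain ⟨w, hw, hwadj⟩ := ih Ws hWdisj hxW
    refine ⟨Fin.cons x w, Fin.cases hx fun i => (mem_filter.1 (hw i)).1, ?_⟩
    exact Fin.pairwise_cons (r := fun a b => ¬ G.Adj a b) (fun i => (mem_filter.1 (hw i)).2)
      (fun i h => (mem_filter.1 (hw i)).2 h.symm) hwadj

end SimpleGraph

theorem stmt2_general {V : Type*} (G : SimpleGraph V)
    (ℓ d : ℕ)
    (hK : ¬ ContainsKll G ℓ) (Vs : Fin d → Finset V)
    (hdisj : ∀ i j : Fin d, i ≠ j → Disjoint (Vs i) (Vs j))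
    (hcard : ∀ i : Fin d, ℓ ^ (d - 1) ≤ (Vs i).card) :
    ∃ v : Fin d → V, (∀ i, v i ∈ Vs i) ∧
      ∀ i j : Fin d, i ≠ j → ¬ G.Adj (v i) (v j) := by
  classical
  cases d with
  | zero => exact ⟨finZeroElim, finZeroElim, finZeroElim⟩
  | succ n =>
    obtain ⟨v, hv, hadj⟩ :=
      G.exists_independent_transversal hK Vs (fun i j => hdisj i j) hcard
    exact ⟨v, hv, fun i j => @hadj i j⟩

theorem stmt2 {V : Type*} [Fintype V] [DecidableEq V] (G : SimpleGraph V)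
    (ℓ d : ℕ) (hd : 1 ≤ d) (hℓ : 2 ≤ ℓ)
    (hK : ¬ ContainsKll G ℓ) (Vs : Fin d → Finset V)
    (hdisj : ∀ i j : Fin d, i ≠ j → Disjoint (Vs i) (Vs j))
    (hcard : ∀ i : Fin d, ℓ ^ (d - 1) ≤ (Vs i).card) :
    ∃ v : Fin d → V, (∀ i, v i ∈ Vs i) ∧
      ∀ i j : Fin d, i ≠ j → ¬ G.Adj (v i) (v j) :=
  stmt2_general G ℓ d hK Vs hdisj hcard
end

section
/- For any integers d ≥ 2 and ℓ ≥ 2, every S'_d-free graph that does not contain K_{ℓ,ℓ} as a subgraph has a vertex of degree at most (ℓ−1)·(ℓ^{d−1} + (d−1)·ℓ^d + ℓ^{2d−2}). -/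
/-- `G` contains an induced copy of `H`. -/
def HasInducedCopy {W V : Type*} (H : SimpleGraph W) (G : SimpleGraph V) : Prop :=
  ∃ f : W ↪ V, ∀ a b : W, G.Adj (f a) (f b) ↔ H.Adj a b

/-- `S'_d`, the 1-subdivision of the star `K_{1,d}`: `none` is the center,
`some (i, false)` is the subdivision vertex on the `i`-th edge, and
`some (i, true)` is the `i`-th leaf. -/
def subdividedStar (d : ℕ) : SimpleGraph (Option (Fin d × Bool)) :=
  SimpleGraph.fromRel (fun a b =>
    (∃ i, a = none ∧ b = some (i, false)) ∨
    (∃ i, a = some (i, false) ∧ b = some (i, true)))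

/-!
Let `u` be a vertex of minimum degree. As `G` has no `K_{ℓ,ℓ}`, if `Z` is a set of more than
`(ℓ - 1) r` common neighbours of one vertex, at most `ℓ - 2` other vertices are adjacent to all
but fewer than `r` vertices of `Z`. Hence most neighbours `p` of `u` miss many vertices of
`N(u)`, and since `deg p ≥ deg u` they have many neighbours outside `N[u]`. We pick the legs
`x_1, …, x_d ∈ N(u)` one at a time from a shrinking pool of candidates, keeping them pairwise
non-adjacent and keeping, for each leg, many private neighbours outside `N[u]` adjacent to no
other leg; every step discards only boundedly many candidates, at the price of dividing the
guaranteed sizes by about `ℓ - 1`. Finally one private neighbour `z_i` of each leg is chosen so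
that the `z_i` are pairwise non-adjacent, by the same greedy argument, and `u`, the `x_i` and the
`z_i` induce `S'_d`.
-/

open Finset

-- `SimpleGraph.card_almostComplete_le` applies to sets of size `kllThreshold ℓ (m + 1)` with
-- `r = kllThreshold ℓ m`
def kllThreshold (ℓ : ℕ) : ℕ → ℕ
  | 0 => 1
  | m + 1 => (ℓ - 1) * kllThreshold ℓ m + 1

theorem mul_add_one_le_kllThreshold (ℓ m : ℕ) : m * (ℓ - 2) + 1 ≤ kllThreshold ℓ m := by
  induction m with
  | zero => simp [kllThreshold]
  | succ m ih =>
    rw [kllThreshold]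
    obtain _ | _ | e := ℓ
    · simp
    · simp
    · simp only [show e + 1 + 1 - 2 = e by omega, show e + 1 + 1 - 1 = e + 1 by omega] at ih ⊢
      calc (m + 1) * e + 1 ≤ (e + 1) * (m * e + 1) + 1 := by ring_nf; omega
        _ ≤ (e + 1) * kllThreshold (e + 1 + 1) m + 1 := by gcongr

theorem kllThreshold_le_pow {ℓ : ℕ} (hℓ : 1 ≤ ℓ) (m : ℕ) :
    kllThreshold ℓ m ≤ ℓ ^ m := by
  induction m with
  | zero => simp [kllThreshold]
  | succ m ih =>
    calc (ℓ - 1) * kllThreshold ℓ m + 1 ≤ (ℓ - 1) * ℓ ^ m + ℓ ^ m :=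
          add_le_add (Nat.mul_le_mul_left _ ih) (Nat.one_le_pow _ _ hℓ)
      _ = ℓ ^ (m + 1) := by
          rw [pow_succ, ← Nat.succ_mul, Nat.succ_eq_add_one, Nat.sub_add_cancel hℓ, mul_comm]

theorem mul_kllThreshold_add_one_le {ℓ d : ℕ} (hℓ : 1 ≤ ℓ) :
    (ℓ - 1) * (kllThreshold ℓ (2 * d - 2) + 1) ≤
      (ℓ - 1) * (ℓ ^ (d - 1) + (d - 1) * ℓ ^ d + ℓ ^ (2 * d - 2)) := by
  have := kllThreshold_le_pow hℓ (2 * d - 2)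
  have := Nat.one_le_pow (d - 1) ℓ hℓ
  exact Nat.mul_le_mul_left _ (by omega)

-- Choosing a leg from a pool of size `poolSize ℓ d (j + 1)` leaves a pool of size
-- `poolSize ℓ d j`; a pool of size `poolSize ℓ d 0` still allows one more choice.
def poolSize (ℓ d : ℕ) : ℕ → ℕ
  | 0 => 2 * d * (ℓ - 1) + 2
  | j + 1 => (ℓ - 1) * (poolSize ℓ d j + (2 * ℓ - 1)) + 1

theorem poolSize_zero_le {ℓ : ℕ} (hℓ : 2 ≤ ℓ) (d j : ℕ) :
    poolSize ℓ d 0 ≤ poolSize ℓ d j := by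
  induction j with
  | zero => rfl
  | succ j ih =>
    calc poolSize ℓ d 0 ≤ 1 * (poolSize ℓ d j + (2 * ℓ - 1)) := by omega
      _ ≤ poolSize ℓ d (j + 1) := Nat.le_succ_of_le (Nat.mul_le_mul_right _ (by omega))

theorem poolSize_two (d j : ℕ) : poolSize 2 d j = 2 * d + 2 + 4 * j := by
  induction j with
  | zero => simp [poolSize]
  | succ j ih => rw [poolSize, ih]; ring

theorem poolSize_add_le_mul_pow {ℓ : ℕ} (hℓ : 3 ≤ ℓ) (d j : ℕ) :
    poolSize ℓ d j + (2 * ℓ + 5) ≤ (2 * d * (ℓ - 1) + 2 * ℓ + 7) * (ℓ - 1) ^ j := by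
  induction j with
  | zero => simp only [poolSize, pow_zero, mul_one]; omega
  | succ j ih =>
    obtain ⟨m, rfl⟩ : ∃ m, ℓ = m + 3 := ⟨ℓ - 3, by omega⟩
    simp only [poolSize, show m + 3 - 1 = m + 2 by omega,
      show 2 * (m + 3) - 1 = 2 * m + 5 by omega, pow_succ] at ih ⊢
    nlinarith

theorem poolSize_add_le {ℓ d : ℕ} (hℓ : 2 ≤ ℓ) (hd : 2 ≤ d) :
    poolSize ℓ d (d - 1) + (ℓ - 2) ≤
      (ℓ - 1) * (ℓ ^ (d - 1) + (d - 1) * ℓ ^ d + ℓ ^ (2 * d - 2)) + 1 := by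
  obtain ⟨e, rfl⟩ : ∃ e, d = e + 2 := ⟨d - 2, by omega⟩
  rcases hℓ.eq_or_lt with rfl | hℓ
  · have he : e < 2 ^ e := Nat.lt_two_pow_self
    have h4 : 2 ^ e ≤ 2 ^ (2 * e) := Nat.pow_le_pow_right (by norm_num) (by omega)
    rw [poolSize_two, show 2 * (e + 2) - 2 = 2 * e + 2 by omega, show e + 2 - 1 = e + 1 by omega]
    simp only [pow_succ, Nat.sub_self, add_zero]
    nlinarith
  obtain ⟨a, rfl⟩ : ∃ a, ℓ = a + 1 := ⟨ℓ - 1, by omega⟩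
  have key := poolSize_add_le_mul_pow hℓ (e + 2) (e + 1)
  simp only [show a + 1 - 1 = a by omega, show a + 1 - 2 = a - 1 by omega,
    show 2 * (e + 2) - 2 = 2 * (e + 1) by omega, show e + 2 - 1 = e + 1 by omega] at key ⊢
  have hcoef : 2 * (e + 3) * a + 9 ≤ (a + 1) + (e + 2) * (a + 1) ^ 2 := by
    obtain ⟨b, rfl⟩ : ∃ b, a = b + 2 := ⟨a - 2, by omega⟩
    ring_nf
    omega
  have hmain : (2 * (e + 3) * a + 9) * a ^ e ≤
      (a + 1) ^ (e + 1) + (e + 1) * (a + 1) ^ (e + 2) + (a + 1) ^ (2 * (e + 1)) := by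
    set s := (a + 1) ^ e with hs_def
    have hs : a ^ e ≤ s := Nat.pow_le_pow_left (by omega) e
    have hss : s ≤ s ^ 2 := Nat.le_self_pow (by norm_num) s
    have h1 : (a + 1) ^ (e + 1) = s * (a + 1) := by rw [hs_def]; ring
    have h2 : (a + 1) ^ (e + 2) = s * (a + 1) ^ 2 := by rw [hs_def]; ring
    have h3 : (a + 1) ^ (2 * (e + 1)) = s ^ 2 * (a + 1) ^ 2 := by rw [hs_def]; ring
    rw [h1, h2, h3]
    nlinarith [Nat.mul_le_mul hcoef hs, Nat.mul_le_mul_right ((a + 1) ^ 2) hss]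
  calc poolSize (a + 1) (e + 2) (e + 1) + (a - 1)
      ≤ (2 * (e + 2) * a + 2 * (a + 1) + 7) * a ^ (e + 1) := by omega
    _ = a * ((2 * (e + 3) * a + 9) * a ^ e) := by ring
    _ ≤ _ := by nlinarith [Nat.mul_le_mul_left a hmain]

theorem add_lt_of_le_mul_of_mul_le {ℓ k a c n : ℕ} (hℓ : 2 ≤ ℓ) (ha : a ≤ k * (ℓ - 2))
    (hc : c * (2 * ℓ - 1) ≤ n * (ℓ - 1)) (hn : 2 * k * (ℓ - 1) < n) : a + c < n := by
  obtain ⟨b, rfl⟩ : ∃ b, ℓ = b + 2 := ⟨ℓ - 2, by omega⟩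
  simp only [show b + 2 - 2 = b by omega, show b + 2 - 1 = b + 1 by omega,
    show 2 * (b + 2) - 1 = 2 * b + 3 by omega] at ha hc hn
  nlinarith

namespace SimpleGraph

variable {V : Type*} {G : SimpleGraph V}

theorem hasInducedCopy_subdividedStar {d : ℕ} {u : V} {x z : Fin d → V}
    (hux : ∀ i, G.Adj u (x i)) (huz : ∀ i, z i ≠ u ∧ ¬ G.Adj u (z i))
    (hxx : ∀ i j, ¬ G.Adj (x i) (x j)) (hxz : ∀ i j, G.Adj (x i) (z j) ↔ i = j)
    (hzz : ∀ i j, ¬ G.Adj (z i) (z j)) :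
    HasInducedCopy (subdividedStar d) G := by
  have hxu i : x i ≠ u := fun h => G.loopless.irrefl u (h ▸ hux i)
  have hxnz i j : x i ≠ z j := fun h => (huz j).2 (h ▸ hux i)
  have hx : x.Injective := fun i j h => ((hxz j i).1 (h ▸ (hxz i i).2 rfl)).symm
  have hz : z.Injective := fun i j h => (hxz i j).1 (h ▸ (hxz i i).2 rfl)
  have hxz' i j : G.Adj (x i) (z j) ↔ j = i := (hxz i j).trans eq_comm
  have hzx i j : G.Adj (z i) (x j) ↔ i = j := (G.adj_comm _ _).trans (hxz' j i)
  let f : Option (Fin d × Bool) → V := fun o => o.elim u fun p => if p.2 then z p.1 else x p.1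
  have hf : ∀ a b, G.Adj (f a) (f b) ↔ (subdividedStar d).Adj a b := by
    rintro (_ | ⟨i, _ | _⟩) (_ | ⟨j, _ | _⟩) <;>
      simp [f, subdividedStar, hux, hxx, hzz, hxz', hzx, huz, G.adj_comm (x _) u,
        G.adj_comm (z _) u]
  have hinj : Function.Injective f := by
    rintro (_ | ⟨i, _ | _⟩) (_ | ⟨j, _ | _⟩) h <;>
      simp only [f, Option.elim, ite_true, Bool.false_eq_true, ite_false] at h
    · rfl
    · exact absurd h.symm (hxu j)
    · exact absurd h.symm (huz j).1
    · exact absurd h (hxu i)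
    · rw [hx h]
    · exact absurd h (hxnz i j)
    · exact absurd h (huz i).1
    · exact absurd h.symm (hxnz j i)
    · rw [hz h]
  exact ⟨⟨f, hinj⟩, hf⟩

variable [Fintype V] [DecidableEq V] [DecidableRel G.Adj]

def almostComplete (G : SimpleGraph V) [DecidableRel G.Adj] (U Z : Finset V) (r : ℕ) :
    Finset V :=
  {v ∈ U | #(Z \ G.neighborFinset v) < r}

theorem card_almostComplete_le {ℓ r : ℕ} {a : V} {U Z : Finset V} (hK : ¬ContainsKll G ℓ)
    (hZ : Z ⊆ G.neighborFinset a) (ha : a ∉ U) (hZr : (ℓ - 1) * r + 1 ≤ #Z) :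
    #(G.almostComplete U Z r) ≤ ℓ - 2 := by
  obtain _ | ℓ := ℓ
  · exact absurd ⟨∅, ∅, by simp⟩ hK
  by_contra! h
  obtain ⟨A, hAU, hA⟩ := exists_subset_card_eq (show ℓ ≤ #(G.almostComplete U Z r) by omega)
  obtain ⟨v, hv⟩ : (G.almostComplete U Z r).Nonempty := card_pos.1 (by omega)
  obtain ⟨s, rfl⟩ : ∃ s, r = s + 1 :=
    Nat.exists_eq_add_one.2 (Nat.zero_lt_of_lt (mem_filter.1 hv).2)
  set B := {b ∈ Z | ∀ a ∈ A, G.Adj a b}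
  have hZB : #(Z \ B) ≤ ℓ * s := calc
    #(Z \ B) ≤ #(A.biUnion fun a => Z \ G.neighborFinset a) :=
      card_le_card fun b hb => by
        obtain ⟨hbZ, hbB⟩ := mem_sdiff.1 hb
        obtain ⟨v, hvA, hvb⟩ : ∃ v ∈ A, ¬G.Adj v b := by simpa [B, hbZ] using hbB
        exact mem_biUnion.2 ⟨v, hvA, by simpa [hbZ] using hvb⟩
    _ ≤ ∑ a ∈ A, #(Z \ G.neighborFinset a) := card_biUnion_le
    _ ≤ ∑ _a ∈ A, s := sum_le_sum fun a ha => Nat.le_of_lt_succ (mem_filter.1 (hAU ha)).2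
    _ = ℓ * s := by simp [hA]
  have hB : ℓ + 1 ≤ #B := by
    have h1 : #(Z \ B) = #Z - #B := card_sdiff_of_subset (filter_subset _ _)
    have h2 : #B ≤ #Z := card_le_card (filter_subset _ _)
    simp only [Nat.add_sub_cancel] at hZr
    rw [mul_add_one] at hZr
    omega
  obtain ⟨B', hB'B, hB'⟩ := exists_subset_card_eq hB
  have haA : a ∉ A := fun h => ha (mem_filter.1 (hAU h)).1
  have hadj : ∀ v ∈ insert a A, ∀ b ∈ B', G.Adj v b := by
    intro v hv b hb
    obtain ⟨hbZ, hbA⟩ := mem_filter.1 (hB'B hb)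
    rcases mem_insert.1 hv with rfl | hvA
    · exact (G.mem_neighborFinset _ _).1 (hZ hbZ)
    · exact hbA v hvA
  refine hK ⟨insert a A, B', ?_, by rw [card_insert_of_notMem haA, hA], hB', hadj⟩
  rw [Finset.disjoint_left]
  intro v hvA hvB
  exact G.loopless.irrefl v (hadj v hvA v hvB)

theorem card_biUnion_almostComplete_le {ι : Type*} {ℓ r : ℕ} {U : Finset V}
    (hK : ¬ContainsKll G ℓ) (s : Finset ι) (a : ι → V) (Z : ι → Finset V)
    (hZ : ∀ i ∈ s, Z i ⊆ G.neighborFinset (a i)) (ha : ∀ i ∈ s, a i ∉ U)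
    (hZr : ∀ i ∈ s, (ℓ - 1) * r + 1 ≤ #(Z i)) :
    #(s.biUnion fun i => G.almostComplete U (Z i) r) ≤ #s * (ℓ - 2) := calc
  _ ≤ ∑ i ∈ s, #(G.almostComplete U (Z i) r) := card_biUnion_le
  _ ≤ ∑ _i ∈ s, (ℓ - 2) :=
    sum_le_sum fun i hi => card_almostComplete_le hK (hZ i hi) (ha i hi) (hZr i hi)
  _ = #s * (ℓ - 2) := by rw [sum_const, smul_eq_mul]

theorem card_almostComplete_le_sub_one {ℓ r : ℕ} {a : V} {U Z : Finset V} (hℓ : 2 ≤ ℓ)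
    (hK : ¬ContainsKll G ℓ) (hZ : Z ⊆ G.neighborFinset a) (hZr : (ℓ - 1) * r + 1 ≤ #Z) :
    #(G.almostComplete U Z r) ≤ ℓ - 1 := calc
  #(G.almostComplete U Z r) ≤ #(insert a (G.almostComplete (U.erase a) Z r)) :=
      card_le_card fun v hv => by
        simp only [almostComplete, mem_filter, mem_insert, mem_erase] at hv ⊢
        tauto
  _ ≤ #(G.almostComplete (U.erase a) Z r) + 1 := card_insert_le _ _
  _ ≤ ℓ - 1 := by have := card_almostComplete_le hK hZ (notMem_erase a U) hZr; omega

theorem card_filter_mul_le_card_mul {ℓ r m : ℕ} {U : Finset V} {Z : V → Finset V}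
    (hℓ : 2 ≤ ℓ) (hK : ¬ContainsKll G ℓ) (hZ : ∀ p ∈ U, Z p ⊆ G.neighborFinset p)
    (hZr : ∀ p ∈ U, (ℓ - 1) * r + 1 ≤ #(Z p)) :
    #{v ∈ U | m ≤ #{p ∈ U | #(Z p \ G.neighborFinset v) < r}} * m ≤ #U * (ℓ - 1) := calc
  _ ≤ ∑ v ∈ {v ∈ U | m ≤ #{p ∈ U | #(Z p \ G.neighborFinset v) < r}},
        #{p ∈ U | #(Z p \ G.neighborFinset v) < r} := by
      rw [← smul_eq_mul]
      exact card_nsmul_le_sum _ _ _ fun v hv => (mem_filter.1 hv).2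
  _ ≤ ∑ v ∈ U, #{p ∈ U | #(Z p \ G.neighborFinset v) < r} :=
      sum_le_sum_of_subset (filter_subset _ _)
  _ = ∑ p ∈ U, #(G.almostComplete U (Z p) r) :=
      sum_card_bipartiteAbove_eq_sum_card_bipartiteBelow _
  _ ≤ ∑ _p ∈ U, (ℓ - 1) :=
      sum_le_sum fun p hp => card_almostComplete_le_sub_one hℓ hK (hZ p hp) (hZr p hp)
  _ = #U * (ℓ - 1) := by rw [sum_const, smul_eq_mul]

theorem exists_indep_transversal {ι : Type*} [DecidableEq ι] {ℓ : ℕ}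
    (hK : ¬ContainsKll G ℓ) (a : ι → V) (s : Finset ι) (W : ι → Finset V)
    (hW : ∀ i ∈ s, W i ⊆ G.neighborFinset (a i)) (ha : ∀ i ∈ s, ∀ j ∈ s, a i ∉ W j)
    (hcard : ∀ i ∈ s, kllThreshold ℓ (#s - 1) ≤ #(W i)) :
    ∃ z : ι → V, (∀ i ∈ s, z i ∈ W i) ∧
      ∀ i ∈ s, ∀ j ∈ s, ¬G.Adj (z i) (z j) := by
  induction s using Finset.induction_on generalizing W with
  | empty => exact ⟨a, by simp, by simp⟩
  | insert b s hb ih =>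
    simp only [card_insert_of_notMem hb, Nat.add_sub_cancel, mem_insert, forall_eq_or_imp]
      at hW ha hcard
    have hs : ∀ i ∈ s, kllThreshold ℓ #s = (ℓ - 1) * kllThreshold ℓ (#s - 1) + 1 := by
      intro i hi
      obtain ⟨t, ht⟩ := Nat.exists_eq_add_one.2 (card_pos.2 ⟨i, hi⟩)
      simp [ht, kllThreshold]
    set bad := s.biUnion fun i => G.almostComplete (W b) (W i) (kllThreshold ℓ (#s - 1))
    have hbad : #bad < #(W b) := calc
      #bad ≤ #s * (ℓ - 2) :=
        card_biUnion_almostComplete_le hK s a W hW.2 (fun i hi => (ha.2 i hi).1)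
          fun i hi => (hs i hi).ge.trans (hcard.2 i hi)
      _ < kllThreshold ℓ #s := mul_add_one_le_kllThreshold ℓ #s
      _ ≤ #(W b) := hcard.1
    obtain ⟨y, hyW, hybad⟩ := exists_mem_notMem_of_card_lt_card hbad
    obtain ⟨z, hzW, hzz⟩ := ih (fun i => W i \ G.neighborFinset y)
      (fun i hi => sdiff_subset.trans (hW.2 i hi))
      (fun i hi j hj => fun h => (ha.2 i hi).2 j hj (mem_sdiff.1 h).1)
      fun i hi => by
        simpa [bad, almostComplete, hyW] using fun h => hybad (mem_biUnion.2 ⟨i, hi, h⟩)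
    have hyz : ∀ i ∈ s, ¬G.Adj y (z i) := fun i hi h =>
      (mem_sdiff.1 (hzW i hi)).2 ((G.mem_neighborFinset _ _).2 h)
    have hzs : ∀ i ∈ s, Function.update z b y i = z i := fun i hi =>
      Function.update_of_ne (ne_of_mem_of_not_mem hi hb) _ _
    refine ⟨Function.update z b y, ?_, ?_⟩ <;>
      simp only [mem_insert, forall_eq_or_imp, Function.update_self]
    · exact ⟨hyW, fun i hi => hzs i hi ▸ (mem_sdiff.1 (hzW i hi)).1⟩
    · refine ⟨⟨G.loopless.irrefl y, fun j hj => hzs j hj ▸ hyz j hj⟩,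
        fun i hi => ⟨?_, ?_⟩⟩
      · exact hzs i hi ▸ fun h => hyz i hi h.symm
      · exact fun j hj => hzs i hi ▸ hzs j hj ▸ hzz i hi j hj

def outerNeighborFinset (u p : V) : Finset V :=
  G.neighborFinset p \ insert u (G.neighborFinset u)

-- for `p ∉ X` this is the set of outer neighbours of `p` that have no neighbour in `X`
def privateNeighborFinset (u : V) (X : Finset V) (p : V) : Finset V :=
  G.outerNeighborFinset u p \ (X.erase p).biUnion fun x => G.neighborFinset x

theorem mem_privateNeighborFinset {u p v : V} {X : Finset V} :
    v ∈ G.privateNeighborFinset u X p ↔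
      G.Adj p v ∧ v ≠ u ∧ ¬G.Adj u v ∧ ∀ x ∈ X, x ≠ p → ¬G.Adj x v := by
  simp only [privateNeighborFinset, outerNeighborFinset, mem_sdiff, mem_neighborFinset, mem_insert,
    mem_biUnion, mem_erase, not_or, not_exists, not_and]
  tauto

theorem privateNeighborFinset_subset (u : V) (X : Finset V) (p : V) :
    G.privateNeighborFinset u X p ⊆ G.neighborFinset p :=
  fun _ hv => (G.mem_neighborFinset _ _).2 (mem_privateNeighborFinset.1 hv).1

theorem privateNeighborFinset_insert_of_ne {u x p : V} {X : Finset V} (h : x ≠ p) :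
    G.privateNeighborFinset u (insert x X) p =
      G.privateNeighborFinset u X p \ G.neighborFinset x := by
  ext v
  simp only [mem_privateNeighborFinset, mem_sdiff, mem_insert, forall_eq_or_imp,
    mem_neighborFinset]
  tauto

theorem privateNeighborFinset_insert_self (u x : V) (X : Finset V) :
    G.privateNeighborFinset u (insert x X) x = G.privateNeighborFinset u X x := by
  ext v
  simp only [mem_privateNeighborFinset, mem_insert, forall_eq_or_imp]
  tauto

theorem card_sdiff_neighborFinset_le (u p : V) (hdeg : G.degree u ≤ G.degree p) :
    #(G.neighborFinset u \ G.neighborFinset p) ≤ #(G.outerNeighborFinset u p) + 1 := by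
  have h1 := card_sdiff_add_card_inter (G.neighborFinset u) (G.neighborFinset p)
  have h2 := card_sdiff_add_card_inter (G.neighborFinset p) (insert u (G.neighborFinset u))
  have h3 : #(G.neighborFinset p ∩ insert u (G.neighborFinset u)) ≤
      #(G.neighborFinset u ∩ G.neighborFinset p) + 1 := by
    rw [inter_comm (G.neighborFinset u)]
    calc _ ≤ #(insert u (G.neighborFinset p ∩ G.neighborFinset u)) :=
          card_le_card fun v => by simp only [mem_inter, mem_insert]; tauto
      _ ≤ _ := card_insert_le _ _
  simp only [card_neighborFinset_eq_degree] at h1 h2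
  unfold outerNeighborFinset
  omega

structure IsLegSet (G : SimpleGraph V) [DecidableRel G.Adj] (u : V) (X : Finset V) (r : ℕ) :
    Prop where
  subset : X ⊆ G.neighborFinset u
  indep : ∀ x ∈ X, ∀ y ∈ X, ¬G.Adj x y
  le_card : ∀ x ∈ X, r ≤ #(G.privateNeighborFinset u X x)

structure IsLegPool (G : SimpleGraph V) [DecidableRel G.Adj] (u : V) (X P : Finset V) (r : ℕ) :
    Prop where
  subset : P ⊆ G.neighborFinset u
  notMem : ∀ p ∈ P, p ∉ X
  not_adj : ∀ x ∈ X, ∀ p ∈ P, ¬G.Adj x p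
  le_card : ∀ p ∈ P, r ≤ #(G.privateNeighborFinset u X p)

theorem IsLegSet.insert {u x : V} {X P : Finset V} {r r' : ℕ} (hX : G.IsLegSet u X r')
    (hP : G.IsLegPool u X P r) (hx : x ∈ P)
    (hxX : ∀ y ∈ X, r ≤ #(G.privateNeighborFinset u X y \ G.neighborFinset x)) :
    G.IsLegSet u (insert x X) r where
  subset := insert_subset (hP.subset hx) hX.subset
  indep := by
    simp only [mem_insert, forall_eq_or_imp]
    exact ⟨⟨G.loopless.irrefl x, fun y hy h => hP.not_adj y hy x hx h.symm⟩,
      fun y hy => ⟨hP.not_adj y hy x hx, hX.indep y hy⟩⟩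
  le_card := by
    simp only [mem_insert, forall_eq_or_imp]
    refine ⟨?_, fun y hy => ?_⟩
    · rw [privateNeighborFinset_insert_self]
      exact hP.le_card x hx
    · rw [privateNeighborFinset_insert_of_ne (ne_of_mem_of_not_mem hy (hP.notMem x hx)).symm]
      exact hxX y hy

theorem IsLegPool.insert {u x : V} {X P : Finset V} {r' : ℕ} (hP : G.IsLegPool u X P r')
    (r : ℕ) :
    G.IsLegPool u (insert x X)
      {p ∈ (P \ G.neighborFinset x).erase x |
        r ≤ #(G.privateNeighborFinset u X p \ G.neighborFinset x)} r where
  subset := (filter_subset _ _).trans <| (erase_subset _ _).trans <| sdiff_subset.trans hP.subset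
  notMem p hp := by
    simp only [mem_filter, mem_erase, mem_sdiff] at hp
    simpa [hp.1.1] using hP.notMem p hp.1.2.1
  not_adj y hy p hp := by
    simp only [mem_filter, mem_erase, mem_sdiff, mem_neighborFinset] at hp
    rcases mem_insert.1 hy with rfl | hy
    · exact hp.1.2.2
    · exact hP.not_adj y hy p hp.1.2.1
  le_card p hp := by
    simp only [mem_filter, mem_erase] at hp
    rw [privateNeighborFinset_insert_of_ne (Ne.symm hp.1.1)]
    exact hp.2

theorem exists_insert_isLegSet {ℓ c : ℕ} {u : V} {X P : Finset V} (hK : ¬ContainsKll G ℓ)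
    (hX : G.IsLegSet u X (kllThreshold ℓ (c + 1))) (hP : G.IsLegPool u X P (kllThreshold ℓ c))
    (hPX : #X * (ℓ - 2) < #P) :
    ∃ x ∈ P, G.IsLegSet u (insert x X) (kllThreshold ℓ c) := by
  set bad := X.biUnion fun y =>
    G.almostComplete P (G.privateNeighborFinset u X y) (kllThreshold ℓ c)
  have hbad : #bad ≤ #X * (ℓ - 2) :=
    card_biUnion_almostComplete_le hK X id _ (fun y _ => privateNeighborFinset_subset u X y)
      (fun y hy h => hP.notMem y h hy) hX.le_card
  obtain ⟨x, hxP, hx⟩ := exists_mem_notMem_of_card_lt_card (hbad.trans_lt hPX)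
  refine ⟨x, hxP, hX.insert hP hxP fun y hy => not_lt.1 fun h => hx ?_⟩
  exact mem_biUnion.2 ⟨y, hy, mem_filter.2 ⟨hxP, h⟩⟩

theorem le_card_filter_erase_sdiff_neighborFinset {P : Finset V} {W : V → Finset V} {x : V}
    {q r t : ℕ} (hx : x ∈ P) (hPx : q + t ≤ #(P \ G.neighborFinset x))
    (hW : #{p ∈ P | #(W p \ G.neighborFinset x) < r} < t) :
    q ≤ #{p ∈ (P \ G.neighborFinset x).erase x | r ≤ #(W p \ G.neighborFinset x)} := by
  have h1 : #((P \ G.neighborFinset x).erase x) = #(P \ G.neighborFinset x) - 1 :=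
    card_erase_of_mem (mem_sdiff.2 ⟨hx, by simp⟩)
  have h2 : #{p ∈ (P \ G.neighborFinset x).erase x | ¬r ≤ #(W p \ G.neighborFinset x)} ≤
      #{p ∈ P | #(W p \ G.neighborFinset x) < r} :=
    card_le_card fun p hp => by
      simp only [mem_filter, mem_erase, mem_sdiff, not_le] at hp ⊢
      exact ⟨hp.1.2.1, hp.2⟩
  have h3 := card_filter_add_card_filter_not (s := (P \ G.neighborFinset x).erase x)
    (fun p => r ≤ #(W p \ G.neighborFinset x))
  omega

theorem exists_insert_isLegSet_isLegPool {ℓ c q : ℕ} {u : V} {X P : Finset V} (hℓ : 2 ≤ ℓ)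
    (hK : ¬ContainsKll G ℓ) (hX : G.IsLegSet u X (kllThreshold ℓ (c + 2)))
    (hP : G.IsLegPool u X P (kllThreshold ℓ (c + 1))) (hPX : 2 * (#X + 1) * (ℓ - 1) < #P)
    (hPq : (ℓ - 1) * (q + (2 * ℓ - 1)) + 1 ≤ #P) :
    ∃ x ∈ P, G.IsLegSet u (insert x X) (kllThreshold ℓ (c + 1)) ∧
      ∃ P', G.IsLegPool u (insert x X) P' (kllThreshold ℓ c) ∧ q ≤ #P' := by
  have huP : u ∉ P := fun h => G.loopless.irrefl u ((G.mem_neighborFinset _ _).1 (hP.subset h))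
  set W := G.privateNeighborFinset u X
  set Va := G.almostComplete P P (q + (2 * ℓ - 1))
  set Vb := X.biUnion fun y => G.almostComplete P (W y) (kllThreshold ℓ (c + 1))
  set Vc := {v ∈ P |
    2 * ℓ - 1 ≤ #{p ∈ P | #(W p \ G.neighborFinset v) < kllThreshold ℓ c}}
  -- `x` must avoid `Va` to keep many candidates non-adjacent to it, `Vb` to keep the private
  -- sets of the legs large, and `Vc` to keep the private sets of most candidates large
  have hVa : #Va ≤ ℓ - 2 := card_almostComplete_le hK hP.subset huP hPq
  have hVb : #Vb ≤ #X * (ℓ - 2) :=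
    card_biUnion_almostComplete_le hK X id W (fun y _ => privateNeighborFinset_subset u X y)
      (fun y hy h => hP.notMem y h hy) hX.le_card
  have hVc : #Vc * (2 * ℓ - 1) ≤ #P * (ℓ - 1) :=
    card_filter_mul_le_card_mul hℓ hK (fun p _ => privateNeighborFinset_subset u X p)
      hP.le_card
  obtain ⟨x, hxP, hx⟩ : ∃ x ∈ P, x ∉ Va ∪ Vb ∪ Vc := by
    refine exists_mem_notMem_of_card_lt_card ?_
    have := card_union_le (Va ∪ Vb) Vc
    have := card_union_le Va Vb
    have := add_lt_of_le_mul_of_mul_le (k := #X + 1) (a := #Va + #Vb) hℓ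
      (by rw [add_one_mul]; omega) hVc hPX
    omega
  simp only [mem_union, not_or] at hx
  obtain ⟨⟨hxa, hxb⟩, hxc⟩ := hx
  refine ⟨x, hxP, hX.insert hP hxP fun y hy => not_lt.1 fun h => hxb ?_,
    _, hP.insert (kllThreshold ℓ c),
    le_card_filter_erase_sdiff_neighborFinset (t := 2 * ℓ - 1) hxP ?_ ?_⟩
  · exact mem_biUnion.2 ⟨y, hy, mem_filter.2 ⟨hxP, h⟩⟩
  · exact not_lt.1 fun h => hxa (mem_filter.2 ⟨hxP, h⟩)
  · exact not_le.1 fun h => hxc (mem_filter.2 ⟨hxP, h⟩)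

theorem exists_isLegSet_isLegPool {ℓ d : ℕ} {u : V} (hℓ : 2 ≤ ℓ) (hd : 2 ≤ d)
    (hK : ¬ContainsKll G ℓ) (hmin : ∀ v, G.degree u ≤ G.degree v)
    (hdeg : (ℓ - 1) * (ℓ ^ (d - 1) + (d - 1) * ℓ ^ d + ℓ ^ (2 * d - 2)) < G.degree u) :
    ∀ k < d, ∃ X P, #X = k ∧ G.IsLegSet u X (kllThreshold ℓ (2 * d - 1 - k)) ∧
      G.IsLegPool u X P (kllThreshold ℓ (2 * d - 2 - k)) ∧
      poolSize ℓ d (d - 1 - k) ≤ #P := by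
  intro k hk
  induction k with
  | zero =>
    simp only [Nat.sub_zero]
    have hN : (ℓ - 1) * (kllThreshold ℓ (2 * d - 2) + 1) + 1 ≤ #(G.neighborFinset u) :=
      (mul_kllThreshold_add_one_le (by omega)).trans_lt hdeg
    set bad := G.almostComplete (G.neighborFinset u) (G.neighborFinset u)
      (kllThreshold ℓ (2 * d - 2) + 1)
    have hbad : #bad ≤ ℓ - 2 := card_almostComplete_le hK subset_rfl (by simp) hN
    refine ⟨∅, G.neighborFinset u \ bad, rfl, ⟨by simp, by simp, by simp⟩,
      ⟨sdiff_subset, by simp, by simp, fun p hp => ?_⟩, ?_⟩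
    · obtain ⟨hpN, hp⟩ := mem_sdiff.1 hp
      have h1 : kllThreshold ℓ (2 * d - 2) + 1 ≤ #(G.neighborFinset u \ G.neighborFinset p) :=
        not_lt.1 fun h => hp (mem_filter.2 ⟨hpN, h⟩)
      have h2 := card_sdiff_neighborFinset_le u p (hmin p)
      simp only [privateNeighborFinset, erase_empty, biUnion_empty, sdiff_empty]
      omega
    · have hsub : bad ⊆ G.neighborFinset u := filter_subset _ _
      have := poolSize_add_le hℓ hd
      rw [card_sdiff_of_subset hsub, card_neighborFinset_eq_degree]
      omega
  | succ k ih =>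
    obtain ⟨X, P, rfl, hX, hP, hPk⟩ := ih (by omega)
    have hP0 : 2 * d * (ℓ - 1) + 2 ≤ #P := (poolSize_zero_le hℓ d _).trans hPk
    have hXd : 2 * (#X + 1) * (ℓ - 1) ≤ 2 * d * (ℓ - 1) := by gcongr
    rw [show 2 * d - 1 - #X = 2 * d - 3 - #X + 2 by omega] at hX
    rw [show 2 * d - 2 - #X = 2 * d - 3 - #X + 1 by omega] at hP
    rw [show d - 1 - #X = d - 2 - #X + 1 by omega] at hPk
    obtain ⟨x, hxP, hX', P', hP', hP'k⟩ :=
      exists_insert_isLegSet_isLegPool hℓ hK hX hP (by omega) hPk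
    refine ⟨insert x X, P', card_insert_of_notMem (hP.notMem x hxP), ?_, ?_, ?_⟩
    · rwa [show 2 * d - 1 - (#X + 1) = 2 * d - 3 - #X + 1 by omega]
    · rwa [show 2 * d - 2 - (#X + 1) = 2 * d - 3 - #X by omega]
    · rwa [show d - 1 - (#X + 1) = d - 2 - #X by omega]

theorem exists_isLegSet {ℓ d : ℕ} {u : V} (hℓ : 2 ≤ ℓ) (hd : 2 ≤ d)
    (hK : ¬ContainsKll G ℓ) (hmin : ∀ v, G.degree u ≤ G.degree v)
    (hdeg : (ℓ - 1) * (ℓ ^ (d - 1) + (d - 1) * ℓ ^ d + ℓ ^ (2 * d - 2)) < G.degree u) :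
    ∃ X, #X = d ∧ G.IsLegSet u X (kllThreshold ℓ (d - 1)) := by
  obtain ⟨X, P, hXd, hX, hP, hPk⟩ :=
    exists_isLegSet_isLegPool hℓ hd hK hmin hdeg (d - 1) (by omega)
  rw [show 2 * d - 1 - (d - 1) = d - 1 + 1 by omega] at hX
  rw [show 2 * d - 2 - (d - 1) = d - 1 by omega] at hP
  rw [show d - 1 - (d - 1) = 0 by omega, poolSize] at hPk
  have : #X * (ℓ - 2) ≤ d * (ℓ - 1) := by gcongr <;> omega
  obtain ⟨x, hxP, hx⟩ := exists_insert_isLegSet hK hX hP (by nlinarith)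
  exact ⟨insert x X, by rw [card_insert_of_notMem (hP.notMem x hxP)]; omega, hx⟩

theorem IsLegSet.hasInducedCopy_subdividedStar {ℓ d : ℕ} {u : V} {X : Finset V}
    (hK : ¬ContainsKll G ℓ) (hXd : #X = d) (hX : G.IsLegSet u X (kllThreshold ℓ (d - 1))) :
    HasInducedCopy (subdividedStar d) G := by
  let e : X ≃ Fin d := Fintype.equivFinOfCardEq (by rw [Fintype.card_coe, hXd])
  let x : Fin d → V := fun i => e.symm i
  have hxX i : x i ∈ X := (e.symm i).2
  have hux i : G.Adj u (x i) := (G.mem_neighborFinset _ _).1 (hX.subset (hxX i))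
  obtain ⟨z, hzW, hzz⟩ := exists_indep_transversal hK x univ
    (fun i => G.privateNeighborFinset u X (x i))
    (fun i _ => privateNeighborFinset_subset u X (x i))
    (fun i _ j _ h => (mem_privateNeighborFinset.1 h).2.2.1 (hux i))
    (fun i _ => by simpa [hXd] using hX.le_card _ (hxX i))
  have hz i := mem_privateNeighborFinset.1 (hzW i (mem_univ i))
  refine SimpleGraph.hasInducedCopy_subdividedStar hux (fun i => ⟨(hz i).2.1, (hz i).2.2.1⟩)
    (fun i j => hX.indep _ (hxX i) _ (hxX j))
    (fun i j => ⟨fun h => ?_, fun h => h ▸ (hz i).1⟩)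
    (fun i j => hzz i (mem_univ _) j (mem_univ _))
  by_contra hij
  exact (hz j).2.2.2 (x i) (hxX i) (fun h => hij (e.symm.injective (Subtype.ext h))) h

end SimpleGraph

theorem stmt3 {V : Type*} [Fintype V] [Nonempty V] [DecidableEq V]
    (G : SimpleGraph V) [DecidableRel G.Adj] (d ℓ : ℕ) (hd : 2 ≤ d) (hℓ : 2 ≤ ℓ)
    (hSfree : ¬ HasInducedCopy (subdividedStar d) G)
    (hK : ¬ ContainsKll G ℓ) :
    ∃ v : V, G.degree v ≤ (ℓ - 1) * (ℓ ^ (d - 1) + (d - 1) * ℓ ^ d + ℓ ^ (2 * d - 2)) := by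
  by_contra! h
  obtain ⟨u, hu⟩ := G.exists_minimal_degree_vertex
  have hmin v : G.degree u ≤ G.degree v := hu ▸ G.minDegree_le_degree v
  obtain ⟨X, hXd, hX⟩ := G.exists_isLegSet hℓ hd hK hmin (h u)
  exact hSfree (hX.hasInducedCopy_subdividedStar hK hXd)
end

section
/- For any integers d ≥ 2 and ℓ ≥ 2, every S'_d-free graph that does not contain K_{ℓ,ℓ} as a subgraph is k-degenerate for some k = O(ℓ^{2d−1}); concretely, its degeneracy is at most (ℓ−1)·(ℓ^{d−1} + (d−1)·ℓ^d + ℓ^{2d−2}) + 1. -/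
/-- `G` is `k`-degenerate: every nonempty induced subgraph has a vertex of
degree at most `k`. -/
def DegeneracyLE {V : Type*} [DecidableEq V] (G : SimpleGraph V)
    [DecidableRel G.Adj] (k : ℕ) : Prop :=
  ∀ S : Finset V, S.Nonempty → ∃ v ∈ S, (S.filter (fun u => G.Adj v u)).card ≤ k

open Finset

theorem Finset.exists_mem_not_of_card_filter_lt {α : Type*} {s : Finset α} {p : α → Prop}
    [DecidablePred p] (h : #{x ∈ s | p x} < #s) : ∃ x ∈ s, ¬p x := by
  obtain ⟨x, hx, hxp⟩ := exists_mem_notMem_of_card_lt_card h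
  exact ⟨x, hx, fun hp => hxp (mem_filter.2 ⟨hx, hp⟩)⟩

namespace SimpleGraph

/-- `(ℓ - 1) * (poolBound ℓ k - 1) + ℓ = poolBound ℓ (k + 1)`, so by
`card_filter_card_nonadj_lt_poolBound_le` a pool of size `poolBound ℓ (k + 1)` keeps
`poolBound ℓ k` non-neighbours of every vertex but `ℓ - 2` exceptional ones. -/
def poolBound (ℓ : ℕ) : ℕ → ℕ
  | 0 => 1
  | k + 1 => (ℓ - 1) * poolBound ℓ k + 1

/-- The number of candidates needed while `k + 1` vertices of the independent set are still to be
chosen: a step keeps the non-neighbours of the chosen vertex, which has more than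
`candBound ℓ d k + 2 * (ℓ - 2)` of them, minus at most `2 * (ℓ - 2)` candidates whose pool it
spoils. -/
def candBound (ℓ d : ℕ) : ℕ → ℕ
  | 0 => 2 * d * (ℓ - 2) + 2
  | k + 1 => (ℓ - 1) * (candBound ℓ d k + 2 * (ℓ - 2)) + ℓ

variable {ℓ d k : ℕ}

theorem poolBound_pos : 0 < poolBound ℓ k := by
  cases k <;> simp [poolBound]

theorem poolBound_le_pow (hℓ : 1 ≤ ℓ) : poolBound ℓ k ≤ ℓ ^ k := by
  obtain ⟨a, rfl⟩ : ∃ a, ℓ = a + 1 := ⟨ℓ - 1, by omega⟩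
  induction k with
  | zero => simp [poolBound]
  | succ k ih =>
    have : 1 ≤ (a + 1) ^ k := Nat.one_le_pow _ _ (by omega)
    simp only [poolBound, Nat.add_sub_cancel, pow_succ]
    nlinarith

theorem mul_lt_poolBound : k * (ℓ - 2) < poolBound ℓ k := by
  rcases Nat.lt_or_ge ℓ 2 with hℓ | hℓ
  · simpa [Nat.sub_eq_zero_of_le hℓ.le] using poolBound_pos
  obtain ⟨b, rfl⟩ : ∃ b, ℓ = b + 2 := ⟨ℓ - 2, by omega⟩
  induction k with
  | zero => simp [poolBound]
  | succ k ih =>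
    have := poolBound_pos (ℓ := b + 2) (k := k)
    simp only [poolBound, show b + 2 - 1 = b + 1 by omega, Nat.add_sub_cancel] at ih ⊢
    nlinarith

theorem le_candBound (hℓ : 2 ≤ ℓ) : 2 * d * (ℓ - 2) + 2 ≤ candBound ℓ d k := by
  induction k with
  | zero => simp [candBound]
  | succ k ih =>
    have : candBound ℓ d k ≤ (ℓ - 1) * candBound ℓ d k := Nat.le_mul_of_pos_left _ (by omega)
    simp only [candBound]
    nlinarith

theorem candBound_le (hℓ : 2 ≤ ℓ) :
    candBound ℓ d k ≤ ℓ ^ k * (2 * d * (ℓ - 2) + 2 + 2 * (ℓ - 1) * k) := by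
  obtain ⟨b, rfl⟩ : ∃ b, ℓ = b + 2 := ⟨ℓ - 2, by omega⟩
  induction k with
  | zero => simp [candBound]
  | succ k ih =>
    have hP : 1 ≤ (b + 2) ^ k := Nat.one_le_pow _ _ (by omega)
    simp only [candBound, Nat.add_sub_cancel, show b + 2 - 1 = b + 1 by omega, pow_succ] at ih ⊢
    have := Nat.mul_le_mul_left (b + 1) ih
    have := Nat.mul_le_mul_right ((b + 2) * (2 * (b + 1))) hP
    nlinarith

theorem mul_poolBound_add_le (hℓ : 1 ≤ ℓ) :
    (ℓ - 1) * poolBound ℓ (2 * d - 2) + ℓ ≤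
      (ℓ - 1) * (ℓ ^ (d - 1) + (d - 1) * ℓ ^ d + ℓ ^ (2 * d - 2)) + 2 := by
  have hpool := Nat.mul_le_mul_left (ℓ - 1) (poolBound_le_pow (k := 2 * d - 2) hℓ)
  have hP : ℓ - 1 ≤ (ℓ - 1) * ℓ ^ (d - 1) := Nat.le_mul_of_pos_right _ (Nat.one_le_pow _ _ hℓ)
  have := Nat.zero_le ((ℓ - 1) * ((d - 1) * ℓ ^ d))
  rw [mul_add, mul_add]
  omega

theorem candBound_add_le (hℓ : 2 ≤ ℓ) (hd : 2 ≤ d) :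
    candBound ℓ d (d - 1) + (ℓ - 2) ≤
      (ℓ - 1) * (ℓ ^ (d - 1) + (d - 1) * ℓ ^ d + ℓ ^ (2 * d - 2)) + 2 := by
  have hcand := candBound_le (d := d) (k := d - 1) hℓ
  obtain ⟨b, rfl⟩ : ∃ b, ℓ = b + 2 := ⟨ℓ - 2, by omega⟩
  obtain ⟨e, rfl⟩ : ∃ e, d = e + 2 := ⟨d - 2, by omega⟩
  obtain ⟨P, hP⟩ : ∃ P, (b + 2) ^ (e + 1) = P := ⟨_, rfl⟩
  have hPb : b + 2 ≤ P := hP ▸ Nat.le_self_pow (by omega) _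
  have hsq : (b + 2) ^ (2 * (e + 2) - 2) = P * P := by
    rw [← hP, ← pow_add]; congr 1; omega
  have hsucc : (b + 2) ^ (e + 2) = P * (b + 2) := by rw [← hP, pow_succ]
  simp only [show e + 2 - 1 = e + 1 by omega, show b + 2 - 2 = b by omega,
    show b + 2 - 1 = b + 1 by omega, hsq, hsucc, hP] at hcand ⊢
  nlinarith [Nat.mul_le_mul_right (e + 1) (Nat.le_mul_self b)]

variable {V : Type*}

theorem containsKll_of_forall_adj {G : SimpleGraph V} {X Y : Finset V} (hX : ℓ ≤ #X)
    (hY : ℓ ≤ #Y) (h : ∀ x ∈ X, ∀ y ∈ Y, G.Adj x y) : ContainsKll G ℓ := by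
  obtain ⟨X', hX'X, hX'⟩ := exists_subset_card_eq hX
  obtain ⟨Y', hY'Y, hY'⟩ := exists_subset_card_eq hY
  exact ⟨X', Y', Finset.disjoint_left.2 fun x hx hy => G.irrefl (h x (hX'X hx) x (hY'Y hy)),
    hX', hY', fun x hx y hy => h x (hX'X hx) y (hY'Y hy)⟩

theorem hasInducedCopy_subdividedStar_s4 {G : SimpleGraph V} {v : V} {m w : Fin d → V}
    (hvm : ∀ i, G.Adj v (m i)) (hvw : ∀ i, ¬G.Adj v (w i)) (hwv : ∀ i, w i ≠ v)
    (hmm : ∀ i j, ¬G.Adj (m i) (m j)) (hmw : ∀ i j, G.Adj (m i) (w j) ↔ i = j)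
    (hww : ∀ i j, ¬G.Adj (w i) (w j)) : HasInducedCopy (subdividedStar d) G := by
  let f : Option (Fin d × Bool) → V
    | none => v
    | some (i, false) => m i
    | some (i, true) => w i
  have hadj : ∀ a b, G.Adj (f a) (f b) ↔ (subdividedStar d).Adj a b := by
    rintro (_ | ⟨i, _ | _⟩) (_ | ⟨j, _ | _⟩) <;>
      simp [f, subdividedStar, hvm, hvw, hmm, hww, hmw, G.adj_comm (w _), G.adj_comm (m _) v,
        eq_comm]
  refine ⟨⟨f, ?_⟩, hadj⟩
  rintro (_ | ⟨i, _ | _⟩) (_ | ⟨j, _ | _⟩) h <;> simp only [f] at h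
  · rfl
  · exact absurd h (G.ne_of_adj (hvm j))
  · exact absurd h.symm (hwv j)
  · exact absurd h.symm (G.ne_of_adj (hvm i))
  · rw [(hmw j i).1 (h ▸ (hmw i i).2 rfl)]
  · exact absurd h fun h => hvw j (h ▸ hvm i)
  · exact absurd h (hwv i)
  · exact absurd h.symm fun h => hvw i (h ▸ hvm j)
  · rw [(hmw i j).1 (h ▸ (hmw i i).2 rfl)]

theorem hasInducedCopy_subdividedStar_of_finset {G : SimpleGraph V} {M : Finset V} (hM : #M = d)
    {v : V} {w : V → V} (hvm : ∀ x ∈ M, G.Adj v x) (hvw : ∀ x ∈ M, ¬G.Adj v (w x))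
    (hwv : ∀ x ∈ M, w x ≠ v) (hmm : ∀ x ∈ M, ∀ y ∈ M, ¬G.Adj x y)
    (hmw : ∀ x ∈ M, ∀ y ∈ M, G.Adj x (w y) ↔ x = y)
    (hww : ∀ x ∈ M, ∀ y ∈ M, ¬G.Adj (w x) (w y)) : HasInducedCopy (subdividedStar d) G := by
  subst hM
  let m : Fin #M → V := fun i => M.equivFin.symm i
  have hm : ∀ i, m i ∈ M := fun i => (M.equivFin.symm i).2
  have hm_inj : ∀ i j, m i = m j ↔ i = j := fun i j => by simp [m]
  exact hasInducedCopy_subdividedStar_s4 (m := m) (w := w ∘ m) (fun i => hvm _ (hm i))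
    (fun i => hvw _ (hm i)) (fun i => hwv _ (hm i)) (fun i j => hmm _ (hm i) _ (hm j))
    (fun i j => (hmw _ (hm i) _ (hm j)).trans (hm_inj i j)) fun i j => hww _ (hm i) _ (hm j)

variable [DecidableEq V] {G : SimpleGraph V} [DecidableRel G.Adj]

theorem card_filter_card_nonadj_le (hK : ¬ContainsKll G ℓ) {u : V} {Y U : Finset V} {r : ℕ}
    (hY : ∀ y ∈ Y, G.Adj u y) (hu : u ∉ U) (hYcard : (ℓ - 1) * r + ℓ ≤ #Y) :
    #{x ∈ U | #{y ∈ Y | ¬G.Adj x y} ≤ r} ≤ ℓ - 2 := by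
  by_contra! hbad
  obtain ⟨T, hTU, hT⟩ :=
    exists_subset_card_eq (show ℓ - 1 ≤ #{x ∈ U | #{y ∈ Y | ¬G.Adj x y} ≤ r} by omega)
  have hmissed : #{y ∈ Y | ¬∀ x ∈ T, G.Adj x y} ≤ (ℓ - 1) * r := by
    calc #{y ∈ Y | ¬∀ x ∈ T, G.Adj x y}
        ≤ #(T.biUnion fun x => {y ∈ Y | ¬G.Adj x y}) := by
          refine card_le_card fun y hy => ?_
          simp only [mem_filter, not_forall] at hy
          obtain ⟨hyY, x, hxT, hxy⟩ := hy
          exact mem_biUnion.2 ⟨x, hxT, mem_filter.2 ⟨hyY, hxy⟩⟩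
      _ ≤ #T * r := card_biUnion_le_card_mul _ _ _ fun x hx => (mem_filter.1 (hTU hx)).2
      _ = (ℓ - 1) * r := by rw [hT]
  have hcommon : ℓ ≤ #{y ∈ Y | ∀ x ∈ T, G.Adj x y} := by
    have := card_filter_add_card_filter_not (s := Y) fun y => ∀ x ∈ T, G.Adj x y
    omega
  apply hK
  refine containsKll_of_forall_adj (X := insert u T) ?_ hcommon fun x hx y hy => ?_
  · rw [card_insert_of_notMem fun huT => hu (mem_filter.1 (hTU huT)).1]
    omega
  · rw [mem_filter] at hy
    rcases mem_insert.1 hx with rfl | hx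
    · exact hY y hy.1
    · exact hy.2 x hx

theorem card_filter_card_nonadj_lt_poolBound_le (hK : ¬ContainsKll G ℓ) {u : V}
    {Y U : Finset V} (hY : ∀ y ∈ Y, G.Adj u y) (hu : u ∉ U) (hYcard : poolBound ℓ (k + 1) ≤ #Y) :
    #{x ∈ U | #{y ∈ Y | ¬G.Adj x y} < poolBound ℓ k} ≤ ℓ - 2 := by
  obtain ⟨a, rfl⟩ : ∃ a, ℓ = a + 1 := by
    refine ⟨ℓ - 1, Nat.succ_pred_eq_of_ne_zero ?_ |>.symm⟩
    rintro rfl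
    exact hK ⟨∅, ∅, disjoint_empty_left _, rfl, rfl, by simp⟩
  obtain ⟨q, hq⟩ : ∃ q, poolBound (a + 1) k = q + 1 :=
    ⟨_, (Nat.succ_pred_eq_of_pos poolBound_pos).symm⟩
  simp only [hq, Nat.lt_add_one_iff]
  refine card_filter_card_nonadj_le hK hY hu ?_
  simp only [poolBound, hq, Nat.add_sub_cancel] at hYcard ⊢
  linarith

theorem card_filter_exists_card_nonadj_lt_poolBound_le (hK : ¬ContainsKll G ℓ)
    {J U : Finset V} {Y : V → Finset V} (hY : ∀ m ∈ J, ∀ y ∈ Y m, G.Adj m y)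
    (hJU : Disjoint J U) (hYcard : ∀ m ∈ J, poolBound ℓ (k + 1) ≤ #(Y m)) :
    #{x ∈ U | ∃ m ∈ J, #{y ∈ Y m | ¬G.Adj x y} < poolBound ℓ k} ≤ #J * (ℓ - 2) :=
  calc _ ≤ #(J.biUnion fun m => {x ∈ U | #{y ∈ Y m | ¬G.Adj x y} < poolBound ℓ k}) := by
        refine card_le_card fun x hx => ?_
        obtain ⟨hxU, m, hm, hlt⟩ := mem_filter.1 hx
        exact mem_biUnion.2 ⟨m, hm, mem_filter.2 ⟨hxU, hlt⟩⟩
    _ ≤ #J * (ℓ - 2) := card_biUnion_le_card_mul _ _ _ fun m hm =>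
        card_filter_card_nonadj_lt_poolBound_le hK (hY m hm)
          (Finset.disjoint_left.1 hJU hm) (hYcard m hm)

/-- Here `x` spoils the pool `Y m` when fewer than `poolBound ℓ k` of its vertices are non-adjacent
to `x`. Each pool is spoiled by at most `ℓ - 2` vertices, so by double counting few vertices spoil
many pools. -/
theorem card_filter_many_spoiled_mul_le (hK : ¬ContainsKll G ℓ) {C : Finset V}
    {Y : V → Finset V} {c : ℕ} (hY : ∀ m ∈ C, ∀ y ∈ Y m, G.Adj m y)
    (hYcard : ∀ m ∈ C, poolBound ℓ (k + 1) ≤ #(Y m)) :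
    #{x ∈ C | c < #{m ∈ C | m ≠ x ∧ #{y ∈ Y m | ¬G.Adj x y} < poolBound ℓ k}} * (c + 1) ≤
      #C * (ℓ - 2) := by
  refine card_mul_le_card_mul (fun x m => m ≠ x ∧ #{y ∈ Y m | ¬G.Adj x y} < poolBound ℓ k)
    (fun x hx => (mem_filter.1 hx).2) fun m hm => ?_
  calc _ ≤ #{x ∈ C.erase m | #{y ∈ Y m | ¬G.Adj x y} < poolBound ℓ k} := by
        refine card_le_card fun x hx => ?_
        simp only [bipartiteBelow, mem_filter] at hx
        exact mem_filter.2 ⟨mem_erase.2 ⟨hx.2.1.symm, hx.1.1⟩, hx.2.2⟩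
    _ ≤ ℓ - 2 := card_filter_card_nonadj_lt_poolBound_le hK (hY m hm) (notMem_erase m C)
        (hYcard m hm)


variable (G) in
/-- The partner of `x` in `S'_d` is chosen here, so that no other vertex of `M` sees it. -/
def privatePool (W : V → Finset V) (M : Finset V) (x : V) : Finset V :=
  {y ∈ W x | ∀ m ∈ M, m ≠ x → ¬G.Adj m y}

variable {W : V → Finset V} {A M C : Finset V} {v x : V} {s : ℕ}

theorem privatePool_subset : privatePool G W M x ⊆ W x := filter_subset _ _

theorem privatePool_empty : privatePool G W ∅ x = W x := by
  simp [privatePool]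

theorem privatePool_insert_self : privatePool G W (insert x M) x = privatePool G W M x := by
  simp [privatePool]

theorem privatePool_insert_of_ne {z : V} (h : x ≠ z) :
    privatePool G W (insert z M) x = {y ∈ privatePool G W M x | ¬G.Adj z y} := by
  ext y
  simp only [privatePool, mem_insert, ne_eq, forall_eq_or_imp, h.symm, not_false_eq_true,
    forall_const, mem_filter]
  tauto

variable (G) in
structure IsPooledIndepSet (A : Finset V) (W : V → Finset V) (ℓ n : ℕ) (M : Finset V) :
    Prop where
  subset : M ⊆ A
  indep : ∀ x ∈ M, ∀ y ∈ M, ¬G.Adj x y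
  pool : ∀ m ∈ M, poolBound ℓ n ≤ #(privatePool G W M m)

variable (G) in
/-- The state of the greedy choice after choosing `M`, with `k + 1` vertices still to be taken from
the candidates `C`. -/
structure GreedyStage (A : Finset V) (W : V → Finset V) (ℓ d s k : ℕ) (M C : Finset V) : Prop
    extends G.IsPooledIndepSet A W ℓ (s + k + 1) M where
  card_add : #M + k + 1 = d
  cand_subset : C ⊆ A
  disjoint : Disjoint M C
  cand_nonadj : ∀ x ∈ C, ∀ m ∈ M, ¬G.Adj m x
  cand_card : candBound ℓ d k ≤ #C
  cand_pool : ∀ x ∈ C, poolBound ℓ (s + k) ≤ #(privatePool G W M x)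

theorem GreedyStage.isPooledIndepSet_insert (h : G.GreedyStage A W ℓ d s k M C) (hx : x ∈ C)
    (hspoil : ∀ m ∈ M, poolBound ℓ (s + k) ≤ #{y ∈ privatePool G W M m | ¬G.Adj x y}) :
    G.IsPooledIndepSet A W ℓ (s + k) (insert x M) where
  subset := insert_subset (h.cand_subset hx) h.subset
  indep := by
    have hxM := h.cand_nonadj x hx
    simp only [forall_mem_insert]
    exact ⟨⟨G.irrefl, fun m hm hxm => hxM m hm hxm.symm⟩, fun y hy => ⟨hxM y hy, h.indep y hy⟩⟩
  pool m hm := by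
    rcases mem_insert.1 hm with rfl | hm
    · rw [privatePool_insert_self]
      exact h.cand_pool m hx
    · rw [privatePool_insert_of_ne
        (ne_of_mem_of_not_mem hm (Finset.disjoint_right.1 h.disjoint hx))]
      exact hspoil m hm

theorem GreedyStage.card_insert (h : G.GreedyStage A W ℓ d s k M C) (hx : x ∈ C) :
    #(insert x M) = #M + 1 :=
  card_insert_of_notMem (Finset.disjoint_right.1 h.disjoint hx)

theorem GreedyStage.exists_isPooledIndepSet_of_zero (hK : ¬ContainsKll G ℓ) (hℓ : 2 ≤ ℓ)
    (hW : ∀ x ∈ A, ∀ y ∈ W x, G.Adj x y) (h : G.GreedyStage A W ℓ d s 0 M C) :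
    ∃ M', G.IsPooledIndepSet A W ℓ s M' ∧ #M' = d := by
  have hspoiling := card_filter_exists_card_nonadj_lt_poolBound_le hK (U := C)
    (fun m hm y hy => hW m (h.subset hm) y (privatePool_subset hy)) h.disjoint h.pool
  have hC := (le_candBound (k := 0) hℓ).trans h.cand_card
  have hM := Nat.mul_le_mul_right (ℓ - 2) (show #M ≤ d by have := h.card_add; omega)
  obtain ⟨x, hx, hgood⟩ := exists_mem_not_of_card_filter_lt
    (hspoiling.trans_lt (by nlinarith))
  push Not at hgood
  exact ⟨insert x M, h.isPooledIndepSet_insert hx hgood, by rw [h.card_insert hx, ← h.card_add]⟩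

theorem GreedyStage.exists_next (hK : ¬ContainsKll G ℓ) (hℓ : 2 ≤ ℓ)
    (hAv : ∀ a ∈ A, G.Adj v a) (hW : ∀ x ∈ A, ∀ y ∈ W x, G.Adj x y)
    (h : G.GreedyStage A W ℓ d s (k + 1) M C) : ∃ M' C', G.GreedyStage A W ℓ d s k M' C' := by
  have hfew := card_filter_card_nonadj_le hK (r := candBound ℓ d k + 2 * (ℓ - 2)) (U := C)
    (fun y hy => hAv y (h.cand_subset hy)) (fun hv => G.irrefl (hAv v (h.cand_subset hv)))
    h.cand_card
  have hspoiling := card_filter_exists_card_nonadj_lt_poolBound_le hK (U := C) (k := s + k + 1)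
    (fun m hm y hy => hW m (h.subset hm) y (privatePool_subset hy)) h.disjoint h.pool
  have hmany := card_filter_many_spoiled_mul_le hK (c := 2 * (ℓ - 2)) (k := s + k)
    (fun m hm y hy => hW m (h.cand_subset hm) y (privatePool_subset hy)) h.cand_pool
  -- `x` has many non-neighbours among the candidates, spoils no chosen pool and at most
  -- `2 * (ℓ - 2)` candidate pools; by `hmany` at most half of `C` spoils more.
  obtain ⟨x, hx, hxgood⟩ := exists_mem_not_of_card_filter_lt (s := C) (p := fun x =>
      #{y ∈ C | ¬G.Adj x y} ≤ candBound ℓ d k + 2 * (ℓ - 2) ∨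
      (∃ m ∈ M, #{y ∈ privatePool G W M m | ¬G.Adj x y} < poolBound ℓ (s + k + 1)) ∨
      2 * (ℓ - 2) <
        #{m ∈ C | m ≠ x ∧ #{y ∈ privatePool G W M m | ¬G.Adj x y} < poolBound ℓ (s + k)}) (by
    have hC := (le_candBound hℓ).trans h.cand_card
    have hM := Nat.mul_le_mul_right (ℓ - 2) (show #M + 1 ≤ d by have := h.card_add; omega)
    have hhalf : 2 * #{x ∈ C | 2 * (ℓ - 2) <
        #{m ∈ C | m ≠ x ∧ #{y ∈ privatePool G W M m | ¬G.Adj x y} < poolBound ℓ (s + k)}} ≤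
        #C := by
      refine Nat.le_of_mul_le_mul_right (c := 2 * (ℓ - 2) + 1) ?_ (by omega)
      nlinarith
    rw [filter_or, filter_or]
    refine (card_union_le _ _).trans_lt ?_
    refine (Nat.add_le_add_left (card_union_le _ _) _).trans_lt ?_
    nlinarith)
  simp only [not_or, not_le, not_exists, not_and, not_lt] at hxgood
  obtain ⟨hxfar, hxspoil, hxmany⟩ := hxgood
  set C' := {y ∈ C | y ≠ x ∧ ¬G.Adj x y ∧
    poolBound ℓ (s + k) ≤ #{z ∈ privatePool G W M y | ¬G.Adj x z}}
  have hC'C : C' ⊆ C := filter_subset _ _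
  refine ⟨insert x M, C', { h.isPooledIndepSet_insert hx hxspoil with
    card_add := by rw [h.card_insert hx, ← h.card_add]; ring
    cand_subset := hC'C.trans h.cand_subset
    disjoint := ?_
    cand_nonadj := ?_
    cand_card := ?_
    cand_pool := ?_ }⟩
  · exact Finset.disjoint_insert_left.2
      ⟨fun hxC' => (mem_filter.1 hxC').2.1 rfl, h.disjoint.mono_right hC'C⟩
  · intro y hy m hm
    obtain ⟨hyC, -, hxy, -⟩ := mem_filter.1 hy
    rcases mem_insert.1 hm with rfl | hm
    exacts [hxy, h.cand_nonadj y hyC m hm]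
  · have hcover : {y ∈ C | ¬G.Adj x y} ⊆ insert x (C' ∪
        {m ∈ C | m ≠ x ∧ #{y ∈ privatePool G W M m | ¬G.Adj x y} < poolBound ℓ (s + k)}) := by
      intro y hy
      obtain ⟨hyC, hxy⟩ := mem_filter.1 hy
      simp only [C', mem_insert, mem_union, mem_filter]
      rcases eq_or_ne y x with hyx | hyx
      · exact Or.inl hyx
      · exact Or.inr ((le_or_gt _ _).imp (fun hle => ⟨hyC, hyx, hxy, hle⟩)
          fun hlt => ⟨hyC, hyx, hlt⟩)
    have := (card_le_card hcover).trans ((card_insert_le _ _).trans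
      (Nat.add_le_add_right (card_union_le _ _) 1))
    omega
  · intro y hy
    obtain ⟨-, hyx, -, hpool⟩ := mem_filter.1 hy
    rw [privatePool_insert_of_ne hyx]
    exact hpool

theorem exists_greedyStage (hK : ¬ContainsKll G ℓ) (hAv : ∀ a ∈ A, G.Adj v a)
    (hWcard : ∀ x ∈ A, #{y ∈ A | ¬G.Adj x y} ≤ #(W x) + 1)
    (hpool : (ℓ - 1) * poolBound ℓ (s + k) + ℓ ≤ #A)
    (hcand : candBound ℓ (k + 1) k + (ℓ - 2) ≤ #A) :
    ∃ C, G.GreedyStage A W ℓ (k + 1) s k ∅ C := by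
  have hfew := card_filter_card_nonadj_le hK hAv (fun hv => G.irrefl (hAv v hv)) hpool
  refine ⟨{x ∈ A | poolBound ℓ (s + k) < #{y ∈ A | ¬G.Adj x y}},
    { subset := empty_subset _
      indep := by simp
      pool := by simp
      card_add := by simp
      cand_subset := filter_subset _ _
      disjoint := disjoint_empty_left _
      cand_nonadj := by simp
      cand_card := ?_
      cand_pool := fun x hx => ?_ }⟩
  · have := card_filter_add_card_filter_not (s := A)
      fun x => poolBound ℓ (s + k) < #{y ∈ A | ¬G.Adj x y}
    simp only [not_lt] at this
    omega
  · have := hWcard x (filter_subset _ _ hx)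
    have := (mem_filter.1 hx).2
    rw [privatePool_empty]
    omega

theorem GreedyStage.exists_isPooledIndepSet (hK : ¬ContainsKll G ℓ) (hℓ : 2 ≤ ℓ)
    (hAv : ∀ a ∈ A, G.Adj v a) (hW : ∀ x ∈ A, ∀ y ∈ W x, G.Adj x y) :
    ∀ {k : ℕ} {M C : Finset V}, G.GreedyStage A W ℓ d s k M C →
      ∃ M', G.IsPooledIndepSet A W ℓ s M' ∧ #M' = d
  | 0, _, _, h => h.exists_isPooledIndepSet_of_zero hK hℓ hW
  | _ + 1, _, _, h =>
    have ⟨_, _, h'⟩ := h.exists_next hK hℓ hAv hW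
    h'.exists_isPooledIndepSet hK hℓ hAv hW

theorem exists_indep_transversal_s4 (hK : ¬ContainsKll G ℓ) (M : Finset V) :
    ∀ Y : V → Finset V, (∀ m ∈ M, ∀ y ∈ Y m, G.Adj m y) → (∀ m ∈ M, Disjoint M (Y m)) →
      (∀ m ∈ M, poolBound ℓ (#M - 1) ≤ #(Y m)) →
      ∃ w : V → V, (∀ m ∈ M, w m ∈ Y m) ∧ ∀ m ∈ M, ∀ m' ∈ M, ¬G.Adj (w m) (w m') := by
  induction M using Finset.induction_on with
  | empty => exact fun _ _ _ _ => ⟨id, by simp, by simp⟩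
  | insert a M ha ih =>
    intro Y hY hdisj hcard
    rw [card_insert_of_notMem ha, Nat.add_sub_cancel] at hcard
    have hspoiling := card_filter_exists_card_nonadj_lt_poolBound_le hK (U := Y a)
      (k := #M - 1) (fun m hm => hY m (mem_insert_of_mem hm))
      ((hdisj a (mem_insert_self a M)).mono_left (subset_insert a M)) fun m hm => by
        rw [Nat.sub_add_cancel (card_pos.2 ⟨m, hm⟩)]
        exact hcard m (mem_insert_of_mem hm)
    obtain ⟨w₀, hw₀, hgood⟩ := exists_mem_not_of_card_filter_lt
      (hspoiling.trans_lt (mul_lt_poolBound.trans_le (hcard a (mem_insert_self a M))))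
    push Not at hgood
    obtain ⟨w, hwY, hwadj⟩ := ih (fun m => {y ∈ Y m | ¬G.Adj w₀ y})
      (fun m hm y hy => hY m (mem_insert_of_mem hm) y (mem_filter.1 hy).1)
      (fun m hm => ((hdisj m (mem_insert_of_mem hm)).mono (subset_insert a M)
        (filter_subset _ _)))
      hgood
    have hw₀w : ∀ m ∈ M, ¬G.Adj w₀ (w m) := fun m hm => (mem_filter.1 (hwY m hm)).2
    have hupdate : ∀ m ∈ M, Function.update w a w₀ m = w m := fun m hm =>
      Function.update_of_ne (ne_of_mem_of_not_mem hm ha) _ _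
    refine ⟨Function.update w a w₀, fun m hm => ?_, fun m hm m' hm' => ?_⟩
    · rcases mem_insert.1 hm with rfl | hm
      · rwa [Function.update_self]
      · rw [hupdate m hm]
        exact (mem_filter.1 (hwY m hm)).1
    · rcases mem_insert.1 hm with rfl | hmM <;> rcases mem_insert.1 hm' with rfl | hm'M
      · exact G.irrefl
      · rw [Function.update_self, hupdate m' hm'M]
        exact hw₀w m' hm'M
      · rw [Function.update_self, hupdate m hmM]
        exact fun hadj => hw₀w m hmM hadj.symm
      · rw [hupdate m hmM, hupdate m' hm'M]
        exact hwadj m hmM m' hm'M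

theorem card_filter_nonadj_le_card_sdiff_add_one {S : Finset V}
    (h : #A ≤ #{y ∈ S | G.Adj x y}) :
    #{y ∈ A | ¬G.Adj x y} ≤ #({y ∈ S | G.Adj x y} \ insert v A) + 1 := by
  have hcover : {y ∈ S | G.Adj x y} ⊆
      ({y ∈ S | G.Adj x y} \ insert v A) ∪ insert v {y ∈ A | G.Adj x y} := by
    intro y hy
    by_cases hyA : y ∈ insert v A
    · refine mem_union_right _ ?_
      rcases mem_insert.1 hyA with rfl | hyA
      · exact mem_insert_self _ _
      · exact mem_insert_of_mem (mem_filter.2 ⟨hyA, (mem_filter.1 hy).2⟩)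
    · exact mem_union_left _ (mem_sdiff.2 ⟨hy, hyA⟩)
  have := (card_le_card hcover).trans
    ((card_union_le _ _).trans (Nat.add_le_add_left (card_insert_le _ _) _))
  have := card_filter_add_card_filter_not (s := A) fun y => G.Adj x y
  omega

theorem hasInducedCopy_subdividedStar_of_minDegree (hK : ¬ContainsKll G ℓ) (hℓ : 2 ≤ ℓ)
    (hd : 1 ≤ d) {S : Finset V} (hmin : ∀ u ∈ S, #{y ∈ S | G.Adj v y} ≤ #{y ∈ S | G.Adj u y})
    (hpool : (ℓ - 1) * poolBound ℓ (2 * d - 2) + ℓ ≤ #{y ∈ S | G.Adj v y})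
    (hcand : candBound ℓ d (d - 1) + (ℓ - 2) ≤ #{y ∈ S | G.Adj v y}) :
    HasInducedCopy (subdividedStar d) G := by
  set A := {y ∈ S | G.Adj v y}
  set W : V → Finset V := fun x => {y ∈ S | G.Adj x y} \ insert v A
  have hAv : ∀ a ∈ A, G.Adj v a := fun a ha => (mem_filter.1 ha).2
  have hW : ∀ x ∈ A, ∀ y ∈ W x, G.Adj x y := fun x _ y hy => (mem_filter.1 (mem_sdiff.1 hy).1).2
  obtain ⟨e, rfl⟩ : ∃ e, d = e + 1 := ⟨d - 1, by omega⟩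
  obtain ⟨C, hC⟩ := exists_greedyStage (s := e) (k := e) hK hAv
    (fun x hx => card_filter_nonadj_le_card_sdiff_add_one (hmin x (mem_filter.1 hx).1))
    (by convert hpool using 4; omega) (by simpa using hcand)
  obtain ⟨M, hM, hMcard⟩ := hC.exists_isPooledIndepSet hK hℓ hAv hW
  have houter : ∀ m ∈ M, ∀ y ∈ privatePool G W M m, y ∈ S ∧ y ∉ insert v A := fun m _ y hy => by
    have := mem_sdiff.1 (privatePool_subset hy)
    exact ⟨(mem_filter.1 this.1).1, this.2⟩
  obtain ⟨w, hwY, hww⟩ := exists_indep_transversal_s4 hK M (privatePool G W M)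
    (fun m hm y hy => hW m (hM.subset hm) y (privatePool_subset hy))
    (fun m hm => Finset.disjoint_right.2 fun y hy hyM =>
      (houter m hm y hy).2 (mem_insert_of_mem (hM.subset hyM)))
    (by simpa [hMcard] using hM.pool)
  have hw_outer : ∀ x ∈ M, w x ∈ S ∧ w x ∉ insert v A := fun x hx => houter x hx _ (hwY x hx)
  refine hasInducedCopy_subdividedStar_of_finset hMcard (fun x hx => hAv x (hM.subset hx))
    (fun x hx hvw => (hw_outer x hx).2 (mem_insert_of_mem (mem_filter.2 ⟨(hw_outer x hx).1, hvw⟩)))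
    (fun x hx hwv => (hw_outer x hx).2 (hwv ▸ mem_insert_self v A)) hM.indep
    (fun x hx y hy => ⟨fun hadj => by_contra fun hxy => ?_, fun hxy => ?_⟩) hww
  · exact (mem_filter.1 (hwY y hy)).2 x hx hxy hadj
  · exact hxy ▸ hW x (hM.subset hx) _ (privatePool_subset (hwY x hx))

end SimpleGraph

theorem stmt4_general {V : Type*} [DecidableEq V]
    (G : SimpleGraph V) [DecidableRel G.Adj] (d ℓ : ℕ) (hd : 2 ≤ d) (hℓ : 2 ≤ ℓ)
    (hSfree : ¬ HasInducedCopy (subdividedStar d) G)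
    (hK : ¬ ContainsKll G ℓ) :
    DegeneracyLE G ((ℓ - 1) * (ℓ ^ (d - 1) + (d - 1) * ℓ ^ d + ℓ ^ (2 * d - 2)) + 1) := by
  intro S hS
  obtain ⟨v, hvS, hmin⟩ := exists_min_image S (fun u => #{y ∈ S | G.Adj u y}) hS
  refine ⟨v, hvS, not_lt.1 fun hdeg => hSfree ?_⟩
  exact SimpleGraph.hasInducedCopy_subdividedStar_of_minDegree hK hℓ (by omega) hmin
    ((SimpleGraph.mul_poolBound_add_le (by omega)).trans (Nat.succ_le_of_lt hdeg))
    ((SimpleGraph.candBound_add_le hℓ hd).trans (Nat.succ_le_of_lt hdeg))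

theorem stmt4 {V : Type*} [Fintype V] [DecidableEq V]
    (G : SimpleGraph V) [DecidableRel G.Adj] (d ℓ : ℕ) (hd : 2 ≤ d) (hℓ : 2 ≤ ℓ)
    (hSfree : ¬ HasInducedCopy (subdividedStar d) G)
    (hK : ¬ ContainsKll G ℓ) :
    DegeneracyLE G ((ℓ - 1) * (ℓ ^ (d - 1) + (d - 1) * ℓ ^ d + ℓ ^ (2 * d - 2)) + 1) :=
  stmt4_general G d ℓ hd hℓ hSfree hK
end

section
/- Every P_5-free graph that does not contain K_{ℓ,ℓ} as a subgraph has degeneracy O(ℓ^3); concretely, degeneracy at most (ℓ−1)·(ℓ + ℓ^2 + ℓ^2) + 1 for ℓ ≥ 2. -/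
/-!
Let `v` have minimum degree in `G[S]`. Greedily pick `v = a₁, a₂, …, a_ℓ` together with a shrinking
set `C ⊆ N(v)` of common neighbours of the chosen vertices, each step costing at most `ℓ²` vertices
of `C`; if `deg v ≥ (ℓ - 1) ℓ² + ℓ`, the final `C` still has `ℓ` vertices and yields a `K_{ℓ,ℓ}`.

For one step, minimality of `deg v` bounds the number of non-neighbours of `u ∈ C` in `C` by the
size of the private set `N(u) \ N(v)`. If all these private sets have more than `ℓ²` vertices, then
for non-adjacent `u, z ∈ C` the induced path `u - v - z` and `P₅`-freeness force one of `u, z` to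
see all but fewer than `ℓ` vertices of the private set of the other, while `K_{ℓ,ℓ}`-freeness lets
each `u` be seen in this way by fewer than `ℓ` vertices. Double counting then gives some `u ∈ C`
with at most `2 (ℓ - 1) ≤ ℓ²` non-neighbours in `C`.
-/

open Finset

theorem Finset.exists_card_filter_le_two_mul {α : Type*} {C : Finset α} (hC : C.Nonempty)
    {r E : α → α → Prop} [DecidableRel r] [DecidableRel E] {k : ℕ}
    (hE : ∀ u ∈ C, #{z ∈ C | E u z} ≤ k) (hr : ∀ u ∈ C, ∀ z ∈ C, r u z → E u z ∨ E z u) :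
    ∃ u ∈ C, #{z ∈ C | r u z} ≤ 2 * k := by
  classical
  refine exists_le_of_sum_le hC ?_
  calc ∑ u ∈ C, #{z ∈ C | r u z}
      ≤ ∑ u ∈ C, (#{z ∈ C | E u z} + #{z ∈ C | E z u}) := by
        refine sum_le_sum fun u hu => (card_le_card fun z hz => ?_).trans (card_union_le _ _)
        rw [mem_filter] at hz
        simpa [mem_union, mem_filter, hz.1] using hr u hu z hz.1 hz.2
    _ = 2 * ∑ u ∈ C, #{z ∈ C | E u z} := by
        rw [sum_add_distrib, two_mul]
        congr 1
        exact (sum_card_bipartiteAbove_eq_sum_card_bipartiteBelow (r := E)).symm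
    _ ≤ ∑ _u ∈ C, 2 * k := by
        rw [← mul_sum]
        exact Nat.mul_le_mul_left 2 (sum_le_sum hE)

theorem DegeneracyLE.mono {V : Type*} [DecidableEq V] {G : SimpleGraph V} [DecidableRel G.Adj]
    {k m : ℕ} (h : DegeneracyLE G k) (hkm : k ≤ m) : DegeneracyLE G m :=
  fun S hS => (h S hS).imp fun _ ⟨hv, hle⟩ => ⟨hv, hle.trans hkm⟩

namespace SimpleGraph

variable {V : Type*} {G : SimpleGraph V} {ℓ : ℕ}

theorem hasInducedCopy_pathGraph_five {y a b c x : V}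
    (hya : G.Adj y a) (hab : G.Adj a b) (hbc : G.Adj b c) (hcx : G.Adj c x)
    (hyb : ¬ G.Adj y b) (hyc : ¬ G.Adj y c) (hyx : ¬ G.Adj y x)
    (hac : ¬ G.Adj a c) (hax : ¬ G.Adj a x) (hbx : ¬ G.Adj b x) :
    HasInducedCopy (pathGraph 5) G := by
  have hadj : ∀ i j, G.Adj (![y, a, b, c, x] i) (![y, a, b, c, x] j) ↔ (pathGraph 5).Adj i j := by
    intro i j
    fin_cases i <;> fin_cases j <;> simp [pathGraph_adj, G.adj_comm, *]
  -- distinct vertices of `P₅` have distinct neighbourhoods, so a map reflecting adjacency is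
  -- injective
  have hnbrs : ∀ i j : Fin 5, (∀ k, (pathGraph 5).Adj i k ↔ (pathGraph 5).Adj j k) → i = j := by
    simp only [pathGraph_adj]; decide
  refine ⟨⟨![y, a, b, c, x], fun i j hij => hnbrs i j fun k => ?_⟩, hadj⟩
  rw [← hadj, ← hadj, hij]

theorem containsKll_of_le_card {A B : Finset V} (hA : ℓ ≤ #A) (hB : ℓ ≤ #B)
    (hAB : ∀ a ∈ A, ∀ b ∈ B, G.Adj a b) : ContainsKll G ℓ := by
  obtain ⟨A', hA', rfl⟩ := exists_subset_card_eq hA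
  obtain ⟨B', hB', hcard⟩ := exists_subset_card_eq hB
  refine ⟨A', B', Finset.disjoint_left.2 fun p hpA hpB => ?_, rfl, hcard,
    fun a ha b hb => hAB a (hA' ha) b (hB' hb)⟩
  exact G.irrefl (hAB p (hA' hpA) p (hB' hpB))

variable [DecidableEq V] [DecidableRel G.Adj]

-- Vertices of the two private neighbourhoods are pairwise adjacent, else they would extend the
-- induced path `a - b - c` to an induced `P₅`.
theorem card_privateNbrs_lt_or (hP5 : ¬ HasInducedCopy (pathGraph 5) G) (hK : ¬ ContainsKll G ℓ)
    (S : Finset V) {a b c : V} (hab : G.Adj a b) (hbc : G.Adj b c) (hac : ¬ G.Adj a c) :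
    #{w ∈ {w ∈ S | G.Adj a w} \ {w ∈ S | G.Adj b w} | ¬ G.Adj c w} < ℓ ∨
    #{w ∈ {w ∈ S | G.Adj c w} \ {w ∈ S | G.Adj b w} | ¬ G.Adj a w} < ℓ := by
  by_contra! h
  refine hK (containsKll_of_le_card h.1 h.2 fun p hp q hq => ?_)
  simp only [mem_filter, mem_sdiff, not_and] at hp hq
  by_contra hpq
  exact hP5 (hasInducedCopy_pathGraph_five hp.1.1.2.symm hab hbc hq.1.1.2
    (fun h => hp.1.2 hp.1.1.1 h.symm) (fun h => hp.2 h.symm) hpq hac hq.2 (hq.1.2 hq.1.1.1))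

-- `ℓ` such vertices `z` would have `ℓ² - ℓ (ℓ - 1) = ℓ` common neighbours in `Q`.
theorem card_filter_card_nonadj_lt_lt (hK : ¬ ContainsKll G ℓ) (C Q : Finset V)
    (hQ : ℓ ^ 2 ≤ #Q) : #{z ∈ C | #{w ∈ Q | ¬ G.Adj z w} < ℓ} < ℓ := by
  by_contra! h
  obtain ⟨Z, hZ, hZcard⟩ := exists_subset_card_eq h
  have hmiss : #(Q \ {w ∈ Q | ∀ z ∈ Z, G.Adj z w}) ≤ ℓ * (ℓ - 1) := by
    refine (card_le_card fun w hw => ?_).trans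
      (hZcard ▸ card_biUnion_le_card_mul Z (fun z => {w ∈ Q | ¬ G.Adj z w}) (ℓ - 1) fun z hz => ?_)
    · simp only [mem_sdiff, mem_filter, not_and, not_forall] at hw
      obtain ⟨z, hz, hzw⟩ := hw.2 hw.1
      exact mem_biUnion.2 ⟨z, hz, mem_filter.2 ⟨hw.1, hzw⟩⟩
    · have := (mem_filter.1 (hZ hz)).2
      omega
  have hcommon : ℓ ≤ #{w ∈ Q | ∀ z ∈ Z, G.Adj z w} := by
    have := card_sdiff_add_card_inter Q {w ∈ Q | ∀ z ∈ Z, G.Adj z w}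
    rw [inter_eq_right.2 (filter_subset _ _)] at this
    rcases ℓ with _ | ℓ
    · omega
    · have : (ℓ + 1) ^ 2 = (ℓ + 1) * ℓ + (ℓ + 1) := by ring
      simp only [Nat.add_sub_cancel] at hmiss
      omega
  exact hK (containsKll_of_le_card hZcard.ge hcommon fun z hz w hw => (mem_filter.1 hw).2 z hz)

theorem card_nonadj_le_card_sdiff {S C : Finset V} {u v : V}
    (hvu : #{w ∈ S | G.Adj v w} ≤ #{w ∈ S | G.Adj u w}) (hC : C ⊆ {w ∈ S | G.Adj v w}) :
    #{z ∈ C | ¬ G.Adj u z} ≤ #({w ∈ S | G.Adj u w} \ {w ∈ S | G.Adj v w}) := by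
  refine (card_le_card fun z hz => ?_).trans (card_sdiff_le_card_sdiff_iff.2 hvu)
  rw [mem_filter] at hz
  have hzS := mem_filter.1 (hC hz.1)
  simp only [mem_sdiff, mem_filter, hzS, hz.2, and_false, not_false_eq_true, and_self]

theorem exists_card_nonadj_le_sq (hP5 : ¬ HasInducedCopy (pathGraph 5) G)
    (hK : ¬ ContainsKll G ℓ) {S : Finset V} {v : V}
    (hv : ∀ u ∈ S, #{w ∈ S | G.Adj v w} ≤ #{w ∈ S | G.Adj u w}) {C : Finset V}
    (hC : C ⊆ {w ∈ S | G.Adj v w}) (hCne : C.Nonempty) :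
    ∃ u ∈ C, #{z ∈ C | ¬ G.Adj u z} ≤ ℓ ^ 2 := by
  have hCS : ∀ u ∈ C, u ∈ S ∧ G.Adj v u := fun u hu => mem_filter.1 (hC hu)
  by_cases hsmall : ∃ u ∈ C, #({w ∈ S | G.Adj u w} \ {w ∈ S | G.Adj v w}) ≤ ℓ ^ 2
  · obtain ⟨u, hu, hle⟩ := hsmall
    exact ⟨u, hu, (card_nonadj_le_card_sdiff (hv u (hCS u hu).1) hC).trans hle⟩
  push Not at hsmall
  obtain ⟨u, hu, hle⟩ := exists_card_filter_le_two_mul hCne (r := fun u z => ¬ G.Adj u z)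
    (E := fun u z => #{w ∈ {w ∈ S | G.Adj u w} \ {w ∈ S | G.Adj v w} | ¬ G.Adj z w} < ℓ)
    (k := ℓ - 1)
    (fun u hu => Nat.le_sub_one_of_lt (card_filter_card_nonadj_lt_lt hK C _ (hsmall u hu).le))
    (fun u hu z hz huz => card_privateNbrs_lt_or hP5 hK S (hCS u hu).2.symm (hCS z hz).2 huz)
  refine ⟨u, hu, hle.trans ?_⟩
  rcases ℓ with _ | ℓ
  · simp
  · simp only [Nat.add_sub_cancel]
    nlinarith

theorem exists_complete_card_eq_succ (hP5 : ¬ HasInducedCopy (pathGraph 5) G)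
    (hK : ¬ ContainsKll G ℓ) {S : Finset V} {v : V}
    (hv : ∀ u ∈ S, #{w ∈ S | G.Adj v w} ≤ #{w ∈ S | G.Adj u w}) :
    ∀ i, i * ℓ ^ 2 < #{w ∈ S | G.Adj v w} → ∃ A C : Finset V, #A = i + 1 ∧
      C ⊆ {w ∈ S | G.Adj v w} ∧ (∀ a ∈ A, ∀ c ∈ C, G.Adj a c) ∧
      #{w ∈ S | G.Adj v w} ≤ #C + i * ℓ ^ 2
  | 0, _ => ⟨{v}, {w ∈ S | G.Adj v w}, card_singleton v, subset_rfl,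
      by simp only [mem_singleton, mem_filter]; rintro a rfl c hc; exact hc.2, by omega⟩
  | i + 1, hi => by
    rw [add_one_mul] at hi
    obtain ⟨A, C, hA, hCN, hAC, hCcard⟩ := exists_complete_card_eq_succ hP5 hK hv i (by omega)
    obtain ⟨u, hu, hfew⟩ := exists_card_nonadj_le_sq hP5 hK hv hCN (card_pos.1 (by omega))
    have huA : u ∉ A := fun h => G.irrefl (hAC u h u hu)
    refine ⟨insert u A, {z ∈ C | G.Adj u z}, by rw [card_insert_of_notMem huA, hA],
      (filter_subset _ _).trans hCN, fun a ha c hc => ?_, ?_⟩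
    · rw [mem_filter] at hc
      rcases mem_insert.1 ha with rfl | ha
      exacts [hc.2, hAC a ha c hc.1]
    · have := card_filter_add_card_filter_not (s := C) (fun z => G.Adj u z)
      rw [add_one_mul]
      omega

theorem degeneracyLE_of_not_hasInducedCopy_of_not_containsKll
    (hP5 : ¬ HasInducedCopy (pathGraph 5) G) (hK : ¬ ContainsKll G ℓ) :
    DegeneracyLE G ((ℓ - 1) * ℓ ^ 2 + (ℓ - 1)) := by
  intro S hS
  obtain ⟨v, hv, hmin⟩ := exists_min_image S (fun v => #{w ∈ S | G.Adj v w}) hS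
  refine ⟨v, hv, not_lt.1 fun hlarge => ?_⟩
  obtain ⟨A, C, hA, -, hAC, hC⟩ :=
    exists_complete_card_eq_succ hP5 hK hmin (ℓ - 1) (by omega)
  exact hK (containsKll_of_le_card (by omega) (by omega) hAC)

end SimpleGraph

theorem stmt5_general {V : Type*} [DecidableEq V]
    (G : SimpleGraph V) [DecidableRel G.Adj] (ℓ : ℕ)
    (hP5free : ¬ HasInducedCopy (SimpleGraph.pathGraph 5) G)
    (hK : ¬ ContainsKll G ℓ) :
    DegeneracyLE G ((ℓ - 1) * (ℓ + ℓ ^ 2 + ℓ ^ 2) + 1) := by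
  refine (G.degeneracyLE_of_not_hasInducedCopy_of_not_containsKll hP5free hK).mono ?_
  rcases ℓ with _ | ℓ
  · simp
  · simp only [Nat.add_sub_cancel]
    nlinarith

theorem stmt5 {V : Type*} [Fintype V] [DecidableEq V]
    (G : SimpleGraph V) [DecidableRel G.Adj] (ℓ : ℕ) (hℓ : 2 ≤ ℓ)
    (hP5free : ¬ HasInducedCopy (SimpleGraph.pathGraph 5) G)
    (hK : ¬ ContainsKll G ℓ) :
    DegeneracyLE G ((ℓ - 1) * (ℓ + ℓ ^ 2 + ℓ ^ 2) + 1) :=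
  stmt5_general G ℓ hP5free hK
end

section
/- Let s, r, M be positive integers with √M ≥ r > s³, and let A = [a_{ij}] be an M×M matrix whose entries a_{ij} are subsets of {1,…,M} of size at most r with i ∉ a_{ij} and j ∉ a_{ij}. Then there exists a subset S ⊆ {1,…,M} with |S| = s such that for all distinct j, j' ∈ S, a_{jj'} ∩ S = ∅. -/
open Finset

lemma count_superset {M s : ℕ} (t : Finset (Fin M)) (ht : t.card = 3) (hs3 : 3 ≤ s) :
    ((Finset.univ.powersetCard s).filter (fun S => t ⊆ S)).card = (M - 3).choose (s - 3) := by
  have hcompl : (tᶜ : Finset (Fin M)).card = M - 3 := by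
    rw [card_compl, ht, Fintype.card_fin]
  rw [← hcompl, ← Finset.card_powersetCard (s - 3) tᶜ]
  apply Finset.card_bij' (fun S _ => S \ t) (fun U _ => U ∪ t)
  · intro S hS
    simp only [mem_filter, Finset.mem_powersetCard_univ] at hS
    rw [Finset.mem_powersetCard]
    refine ⟨fun x hx => ?_, ?_⟩
    · simp only [mem_sdiff] at hx; simpa using hx.2
    · rw [card_sdiff_of_subset hS.2, hS.1, ht]
  · intro U hU
    rw [Finset.mem_powersetCard] at hU
    have hdisj : Disjoint U t := by
      rw [Finset.disjoint_right]
      intro x hx hxU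
      have := hU.1 hxU; simp at this; exact this hx
    simp only [mem_filter, Finset.mem_powersetCard_univ]
    refine ⟨?_, subset_union_right⟩
    rw [card_union_of_disjoint hdisj, hU.2, ht]; omega
  · intro S hS
    simp only [mem_filter] at hS
    exact sdiff_union_of_subset hS.2
  · intro U hU
    rw [Finset.mem_powersetCard] at hU
    have hdisj : Disjoint U t := by
      rw [Finset.disjoint_right]
      intro x hx hxU
      have := hU.1 hxU; simp at this; exact this hx
    exact union_sdiff_cancel_right hdisj

theorem stmt6 (s r M : ℕ) (hs : 1 ≤ s) (hM : 1 ≤ M)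
    (hrM : r ^ 2 ≤ M) (hsr : s ^ 3 < r)
    (a : Fin M → Fin M → Finset (Fin M))
    (hbounded : ∀ i j, (a i j).card ≤ r)
    (hii : ∀ i j, i ∉ a i j) (hjj : ∀ i j, j ∉ a i j) :
    ∃ S : Finset (Fin M), S.card = s ∧
      ∀ j ∈ S, ∀ j' ∈ S, j ≠ j' → ∀ i ∈ S, i ∉ a j j' := by
  have hsM : s ≤ M := by
    have h1 : s ≤ s ^ 3 := Nat.le_self_pow (by norm_num) s
    have h2 : r ≤ r ^ 2 := Nat.le_self_pow (by norm_num) r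
    omega
  by_cases hs3 : s ≤ 2
  · -- trivial case: any s-subset works
    obtain ⟨S, _, hScard⟩ := Finset.exists_subset_card_eq (by simpa using hsM :
      s ≤ (Finset.univ : Finset (Fin M)).card)
    refine ⟨S, hScard, ?_⟩
    intro j hj j' hj' hne i hi hmem
    have hiS : i = j ∨ i = j' := by
      by_contra h
      push_neg at h
      have : 3 ≤ S.card := by
        have : ({j, j', i} : Finset (Fin M)) ⊆ S := by
          intro x hx; simp at hx; rcases hx with h|h|h <;> subst h <;> assumption
        calc 3 = ({j, j', i} : Finset (Fin M)).card := by
                rw [card_insert_of_notMem (by simp [hne, Ne.symm h.1]),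
                  card_insert_of_notMem (by simp [Ne.symm h.2]), card_singleton]
             _ ≤ S.card := card_le_card this
      omega
    rcases hiS with rfl | rfl
    · exact hii _ _ hmem
    · exact hjj _ _ hmem
  push_neg at hs3
  have hs3' : 3 ≤ s := hs3
  have hr : 28 ≤ r := by
    have : 3 ^ 3 ≤ s ^ 3 := Nat.pow_le_pow_left hs3' 3
    omega
  have hM' : 784 ≤ M := by
    have : 28 ^ 2 ≤ r ^ 2 := Nat.pow_le_pow_left hr 2
    omega
  set C := (M - 3).choose (s - 3) with hC
  set 𝒮 := (Finset.univ : Finset (Fin M)).powersetCard s with h𝒮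
  set B : Finset (Fin M) → ℕ := fun S =>
    ∑ p : Fin M × Fin M × Fin M,
      if p.1 ∈ S ∧ p.2.1 ∈ S ∧ p.2.2 ∈ S ∧ p.1 ≠ p.2.1 ∧ p.2.2 ∈ a p.1 p.2.1 then 1 else 0
    with hB
  -- Step 1: the double count
  have step1 : ∑ S ∈ 𝒮, B S ≤ M * M * (r * C) := by
    rw [hB]
    rw [Finset.sum_comm]
    have inner : ∀ p : Fin M × Fin M × Fin M,
        (∑ S ∈ 𝒮, if p.1 ∈ S ∧ p.2.1 ∈ S ∧ p.2.2 ∈ S ∧ p.1 ≠ p.2.1 ∧ p.2.2 ∈ a p.1 p.2.1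
          then 1 else 0)
        ≤ if p.1 ≠ p.2.1 ∧ p.2.2 ∈ a p.1 p.2.1 then C else 0 := by
      intro p
      by_cases hcond : p.1 ≠ p.2.1 ∧ p.2.2 ∈ a p.1 p.2.1
      · rw [if_pos hcond]
        have h1 : p.2.2 ≠ p.1 := fun h => hii _ _ (h ▸ hcond.2)
        have h2 : p.2.2 ≠ p.2.1 := fun h => hjj _ _ (h ▸ hcond.2)
        have ht3 : ({p.1, p.2.1, p.2.2} : Finset (Fin M)).card = 3 := by
          rw [card_insert_of_notMem (by simp [hcond.1, Ne.symm h1]),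
            card_insert_of_notMem (by simp [Ne.symm h2]), card_singleton]
        have := count_superset ({p.1, p.2.1, p.2.2} : Finset (Fin M)) ht3 hs3'
        rw [← hC] at this
        rw [← this, Finset.card_filter]
        apply Finset.sum_le_sum
        intro S _
        split_ifs with h1' h2' h2'
        · exact le_refl 1
        · exact absurd (by simp [insert_subset_iff, h1'.1, h1'.2.1, h1'.2.2.1]) h2'
        · omega
        · exact le_refl 0
      · rw [if_neg hcond]
        apply Nat.le_of_eq
        apply Finset.sum_eq_zero
        intro S _
        rw [if_neg]
        tauto
    calc ∑ p : Fin M × Fin M × Fin M, (∑ S ∈ 𝒮, if p.1 ∈ S ∧ p.2.1 ∈ S ∧ p.2.2 ∈ S ∧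
            p.1 ≠ p.2.1 ∧ p.2.2 ∈ a p.1 p.2.1 then 1 else 0)
        ≤ ∑ p : Fin M × Fin M × Fin M,
            if p.1 ≠ p.2.1 ∧ p.2.2 ∈ a p.1 p.2.1 then C else 0 :=
          Finset.sum_le_sum fun p _ => inner p
      _ ≤ M * M * (r * C) := by
          rw [Fintype.sum_prod_type]
          have : ∀ j : Fin M, (∑ q : Fin M × Fin M,
              if j ≠ q.1 ∧ q.2 ∈ a j q.1 then C else 0) ≤ M * (r * C) := by
            intro j
            rw [Fintype.sum_prod_type]
            have : ∀ j' : Fin M, (∑ i : Fin M, if j ≠ j' ∧ i ∈ a j j' then C else 0)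
                ≤ r * C := by
              intro j'
              calc (∑ i : Fin M, if j ≠ j' ∧ i ∈ a j j' then C else 0)
                  ≤ ∑ i : Fin M, if i ∈ a j j' then C else 0 := by
                    apply Finset.sum_le_sum
                    intro i _
                    split_ifs with h1' h2' h2'
                    · exact le_refl C
                    · exact absurd h1'.2 h2'
                    · omega
                    · exact le_refl 0
                _ = (a j j').card * C := by
                    rw [Finset.sum_ite_mem, univ_inter, Finset.sum_const, smul_eq_mul]
                _ ≤ r * C := Nat.mul_le_mul_right C (hbounded j j')
            calc (∑ j' : Fin M, ∑ i : Fin M, if j ≠ j' ∧ i ∈ a j j' then C else 0)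
                ≤ ∑ _j' : Fin M, r * C := Finset.sum_le_sum fun j' _ => this j'
              _ = M * (r * C) := by simp [Finset.card_univ, mul_comm]
          calc (∑ j : Fin M, ∑ q : Fin M × Fin M,
                if j ≠ q.1 ∧ q.2 ∈ a j q.1 then C else 0)
              ≤ ∑ _j : Fin M, M * (r * C) := Finset.sum_le_sum fun j _ => this j
            _ = M * M * (r * C) := by simp [Finset.card_univ]; ring
  -- Step 2: arithmetic
  have hCpos : 0 < C := Nat.choose_pos (by omega)
  have key : M * M * (r * C) < M.choose s := by
    obtain ⟨c, rfl⟩ : ∃ c, s = c + 3 := ⟨s - 3, by omega⟩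
    obtain ⟨m, hm⟩ : ∃ m, M = m + 3 := ⟨M - 3, by omega⟩
    have hid : M.choose (c + 3) * ((c + 3) * (c + 2) * (c + 1)) =
        M * (M - 1) * (M - 2) * C := by
      subst hm
      have e1 : (m + 3).choose (c + 3) * (c + 3) = (m + 3) * (m + 2).choose (c + 2) := by
        simpa [Nat.succ_eq_add_one] using (Nat.add_one_mul_choose_eq (m + 2) (c + 2)).symm
      have e2 : (m + 2).choose (c + 2) * (c + 2) = (m + 2) * (m + 1).choose (c + 1) := by
        simpa [Nat.succ_eq_add_one] using (Nat.add_one_mul_choose_eq (m + 1) (c + 1)).symm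
      have e3 : (m + 1).choose (c + 1) * (c + 1) = (m + 1) * m.choose c := by
        simpa [Nat.succ_eq_add_one] using (Nat.add_one_mul_choose_eq m c).symm
      have hCm : C = m.choose c := by rw [hC]; congr 1 <;> omega
      have h1 : m + 3 - 1 = m + 2 := by omega
      have h2 : m + 3 - 2 = m + 1 := by omega
      rw [hCm, h1, h2]
      calc (m + 3).choose (c + 3) * ((c + 3) * (c + 2) * (c + 1))
          = ((m + 3).choose (c + 3) * (c + 3)) * (c + 2) * (c + 1) := by ring
        _ = ((m + 3) * (m + 2).choose (c + 2)) * (c + 2) * (c + 1) := by rw [e1]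
        _ = (m + 3) * ((m + 2).choose (c + 2) * (c + 2)) * (c + 1) := by ring
        _ = (m + 3) * ((m + 2) * (m + 1).choose (c + 1)) * (c + 1) := by rw [e2]
        _ = (m + 3) * (m + 2) * ((m + 1).choose (c + 1) * (c + 1)) := by ring
        _ = (m + 3) * (m + 2) * ((m + 1) * m.choose c) := by rw [e3]
        _ = (m + 3) * (m + 2) * (m + 1) * m.choose c := by ring
    have hineq : M * r * ((c + 3) * (c + 2) * (c + 1)) < (M - 1) * (M - 2) := by
      subst hm
      have h1 : m + 3 - 1 = m + 2 := by omega
      have h2 : m + 3 - 2 = m + 1 := by omega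
      rw [h1, h2]
      have hcr : (c + 3) ^ 3 < r := hsr
      have hP : (c + 3) * (c + 2) * (c + 1) + 21 ≤ (c + 3) ^ 3 := by nlinarith [Nat.zero_le c]
      have hA : r * ((c + 3) * (c + 2) * (c + 1)) + 22 * r ≤ m + 3 := by
        have h2' : r * ((c + 3) * (c + 2) * (c + 1) + 22) ≤ r * r :=
          Nat.mul_le_mul_left r (by omega)
        have h3' : r * r ≤ m + 3 := by
          have : r * r = r ^ 2 := (sq r).symm
          omega
        nlinarith
      nlinarith [Nat.mul_le_mul_right (m + 3) hA, Nat.mul_le_mul_right (m + 3) hr,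
        Nat.zero_le m]
    -- multiply hineq by M * C and use hid
    have hfac : 0 < (c + 3) * (c + 2) * (c + 1) := by positivity
    have : M * M * (r * C) * ((c + 3) * (c + 2) * (c + 1)) <
        M.choose (c + 3) * ((c + 3) * (c + 2) * (c + 1)) := by
      rw [hid]
      calc M * M * (r * C) * ((c + 3) * (c + 2) * (c + 1))
          = (M * r * ((c + 3) * (c + 2) * (c + 1))) * (M * C) := by ring
        _ < ((M - 1) * (M - 2)) * (M * C) := by
            apply Nat.mul_lt_mul_of_lt_of_le hineq (le_refl _)
            positivity
        _ = M * (M - 1) * (M - 2) * C := by ring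
    exact Nat.lt_of_mul_lt_mul_right this
  -- Step 3: find a good S
  have hsum : ∑ S ∈ 𝒮, B S < ∑ S ∈ 𝒮, 1 := by
    calc ∑ S ∈ 𝒮, B S ≤ M * M * (r * C) := step1
      _ < M.choose s := key
      _ = ∑ S ∈ 𝒮, 1 := by
          rw [Finset.sum_const, smul_eq_mul, mul_one, h𝒮, Finset.card_powersetCard,
            card_univ, Fintype.card_fin]
  obtain ⟨S, hS𝒮, hBS⟩ := Finset.exists_lt_of_sum_lt hsum
  refine ⟨S, by rwa [h𝒮, Finset.mem_powersetCard_univ] at hS𝒮, ?_⟩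
  intro j hj j' hj' hne i hi hmem
  have hB0 : B S = 0 := by omega
  rw [hB] at hB0
  have := (Finset.sum_eq_zero_iff.mp hB0) (j, j', i) (Finset.mem_univ _)
  simp only at this
  rw [if_pos ⟨hj, hj', hi, hne, hmem⟩] at this
  exact one_ne_zero this
end

section
/- Let q ∈ ℕ, t ≥ 4 even, and let G be a graph with no induced cycle on at least t vertices. Let X be a set of at least q·t/2 vertices of G such that G[X] is q-colorable, and let Y be an independent set in G disjoint from X. Then there exists Y' ⊆ Y with |Y'| ≥ |Y| / |X|^{qt/2} such that all vertices of Y' have exactly the same set of neighbors inside X. -/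
/-- `G` is `C_{≥t}`-free: it has no induced cycle with at least `t` vertices. -/
def CgeFree {V : Type*} (t : ℕ) (G : SimpleGraph V) : Prop :=
  ∀ n : ℕ, t ≤ n → ¬ HasInducedCopy (SimpleGraph.cycleGraph n) G

open Finset SimpleGraph Function

section

variable {V : Type*}

lemma sum_range_choose_le_pow {n D : ℕ} (hn : 2 ≤ n) (hD : 2 ≤ D) :
    ∑ j ∈ range (D + 1), n.choose j ≤ n ^ D := by
  induction D, hD using Nat.le_induction with
  | base =>
    have h2 := Nat.descFactorial_eq_factorial_mul_choose n 2
    simp only [Nat.descFactorial, Nat.factorial_two] at h2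
    simp only [sum_range_succ, range_zero, sum_empty, Nat.choose_zero_right, Nat.choose_one_right]
    obtain ⟨m, rfl⟩ := Nat.exists_eq_add_of_le' hn
    simp only [Nat.sub_zero, mul_one] at h2
    rw [show m + 2 - 1 = m + 1 by omega] at h2
    nlinarith
  | succ D hD ih =>
    have hchoose : 2 * n.choose (D + 1) ≤ n ^ (D + 1) := calc
      2 * n.choose (D + 1) ≤ (D + 1).factorial * n.choose (D + 1) :=
        Nat.mul_le_mul_right _ (by simpa using Nat.factorial_le (by omega : 2 ≤ D + 1))
      _ = n.descFactorial (D + 1) := (Nat.descFactorial_eq_factorial_mul_choose _ _).symm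
      _ ≤ n ^ (D + 1) := Nat.descFactorial_le_pow _ _
    have hpow : 2 * n ^ D ≤ n ^ (D + 1) := by rw [pow_succ']; exact Nat.mul_le_mul_right _ hn
    rw [sum_range_succ]
    omega

lemma card_le_sum_choose_of_vcDim_le [DecidableEq V] {𝒜 : Finset (Finset V)} {X : Finset V}
    {D : ℕ} (h𝒜 : ∀ s ∈ 𝒜, s ⊆ X) (hD : 𝒜.vcDim ≤ D) :
    #𝒜 ≤ ∑ j ∈ range (D + 1), (#X).choose j := by
  have hsub : 𝒜.shatterer ⊆ (range (D + 1)).biUnion X.powersetCard := by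
    intro s hs
    have hs := mem_shatterer.1 hs
    obtain ⟨u, hu, hsu⟩ := hs.exists_superset
    exact mem_biUnion.2 ⟨#s, mem_range.2 (Nat.lt_succ_of_le (hs.card_le_vcDim.trans hD)),
      mem_powersetCard.2 ⟨hsu.trans (h𝒜 u hu), rfl⟩⟩
  calc #𝒜 ≤ #𝒜.shatterer := card_le_card_shatterer 𝒜
    _ ≤ #((range (D + 1)).biUnion X.powersetCard) := card_le_card hsub
    _ ≤ ∑ j ∈ range (D + 1), #(X.powersetCard j) := card_biUnion_le
    _ = ∑ j ∈ range (D + 1), (#X).choose j := by simp only [card_powersetCard]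

lemma exists_subset_card_le_mul_card_image_of_eq {α β : Type*} [DecidableEq β]
    (s : Finset α) (f : α → β) :
    ∃ s' ⊆ s, #s ≤ #s' * #(s.image f) ∧ ∀ a ∈ s', ∀ a' ∈ s', f a = f a' := by
  rcases s.eq_empty_or_nonempty with rfl | hs
  · exact ⟨∅, empty_subset _, by simp, by simp⟩
  obtain ⟨b, -, hmax⟩ := exists_max_image (s.image f) (fun b => #{a ∈ s | f a = b}) (hs.image f)
  refine ⟨{a ∈ s | f a = b}, filter_subset _ _, ?_, fun a ha a' ha' => ?_⟩
  · calc #s = ∑ b ∈ s.image f, #{a ∈ s | f a = b} := card_eq_sum_card_image f s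
      _ ≤ ∑ _b ∈ s.image f, #{a ∈ s | f a = b} := sum_le_sum hmax
      _ = #{a ∈ s | f a = b} * #(s.image f) := by rw [sum_const, smul_eq_mul, mul_comm]
  · rw [(mem_filter.1 ha).2, (mem_filter.1 ha').2]

lemma cycleGraph_adj_mod_two_ne {N : ℕ} (hN : Even N) {p r : Fin N}
    (h : (cycleGraph N).Adj p r) : p.val % 2 ≠ r.val % 2 := by
  have := (cycleGraph.bicoloring_of_even N hN).valid h
  simp only [cycleGraph.bicoloring_of_even, Coloring.mk, RelHom.coeFn_mk, ne_eq,
    decide_eq_decide] at this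
  omega

open Fin.CommRing in
lemma cycleGraph_neighborSet_injective {n : ℕ} (hn : 3 ≤ n) :
    Injective (cycleGraph (n + 2)).neighborSet := by
  intro p p' h
  simp only [cycleGraph_neighborSet] at h
  have hsucc : p + 1 ∈ ({p' - 1, p' + 1} : Set (Fin (n + 2))) := h ▸ by simp
  have hpred : p - 1 ∈ ({p' - 1, p' + 1} : Set (Fin (n + 2))) := h ▸ by simp
  simp only [Set.mem_insert_iff, Set.mem_singleton_iff] at hsucc hpred
  rcases hsucc with hsucc | hsucc
  · rcases hpred with hpred | hpred
    · simpa using hpred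
    · have h4 : (4 : Fin (n + 2)) = 0 := by linear_combination hsucc - hpred
      have h4val : ((4 : Fin (n + 2)) : ℕ) = 4 := Nat.mod_eq_of_lt (a := 4) (by omega)
      simp [h4] at h4val
  · simpa using hsucc

lemma hasInducedCopy_cycleGraph_of_alternating {G : SimpleGraph V} {N : ℕ} (hN : Even N)
    (f : Fin N ↪ V) (hsame : ∀ p r : Fin N, p.val % 2 = r.val % 2 → ¬ G.Adj (f p) (f r))
    (hcross : ∀ p r : Fin N, p.val % 2 = 1 → r.val % 2 = 0 →
      (G.Adj (f p) (f r) ↔ (cycleGraph N).Adj p r)) :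
    HasInducedCopy (cycleGraph N) G := by
  refine ⟨f, fun p r => ?_⟩
  by_cases hpr : p.val % 2 = r.val % 2
  · exact iff_of_false (hsame p r hpr) fun h => cycleGraph_adj_mod_two_ne hN h hpr
  · rcases Nat.mod_two_eq_zero_or_one p with hp | hp
    · rw [G.adj_comm, (cycleGraph N).adj_comm]
      exact hcross r p (by omega) hp
    · exact hcross p r hp (by omega)

lemma exists_fin_map_mem_injective_on_parity {A : Finset V} {N : ℕ} (hN : N = 2 * #A) :
    ∃ u : Fin N → V, (∀ r, u r ∈ A) ∧
      ∀ r r' : Fin N, r.val % 2 = r'.val % 2 → u r = u r' → r = r' := by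
  refine ⟨fun r => A.equivFin.symm ⟨r / 2, by omega⟩, fun r => (A.equivFin.symm _).2,
    fun r r' hpar h => ?_⟩
  have := congrArg Fin.val (A.equivFin.symm.injective (Subtype.ext h))
  simp only at this
  omega

theorem hasInducedCopy_cycleGraph_of_shatters {G : SimpleGraph V} {A Y : Finset V}
    (hA : 3 ≤ #A) (hAind : G.IsIndepSet A) (hYind : G.IsIndepSet Y) (hAY : Disjoint A Y)
    (hshat : ∀ T ⊆ A, ∃ z ∈ Y, ∀ x ∈ A, G.Adj z x ↔ x ∈ T) :
    HasInducedCopy (cycleGraph (2 * #A)) G := by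
  classical
  obtain ⟨n, hn⟩ : ∃ n, n + 2 = 2 * #A := ⟨2 * #A - 2, by omega⟩
  rw [← hn]
  let C := cycleGraph (n + 2)
  have hC : Even (n + 2) := hn ▸ even_two_mul _
  obtain ⟨u, hu_mem, hu_inj⟩ := exists_fin_map_mem_injective_on_parity hn
  -- `y p` sees exactly the `u`-images of the cycle neighbours of `p`
  choose y hyY hy using fun p : Fin (n + 2) =>
    hshat ((univ.filter (C.Adj p)).image u) (image_subset_iff.2 fun r _ => hu_mem r)
  have hyu (p r : Fin (n + 2)) (hp : p.val % 2 = 1) (hr : r.val % 2 = 0) :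
      G.Adj (y p) (u r) ↔ C.Adj p r := by
    rw [hy p _ (hu_mem r)]
    simp only [mem_image, mem_filter, mem_univ, true_and]
    constructor
    · rintro ⟨r', hadj, heq⟩
      have := cycleGraph_adj_mod_two_ne hC hadj
      rwa [← hu_inj r' r (by omega) heq]
    · exact fun h => ⟨r, h, rfl⟩
  have hy_inj (p p' : Fin (n + 2)) (hp : p.val % 2 = 1) (hp' : p'.val % 2 = 1)
      (h : y p = y p') : p = p' := by
    refine cycleGraph_neighborSet_injective (by omega) (Set.ext fun r => ?_)
    rcases Nat.mod_two_eq_zero_or_one r with hr | hr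
    · exact (hyu p r hp hr).symm.trans (h ▸ hyu p' r hp' hr)
    · exact iff_of_false (fun h => cycleGraph_adj_mod_two_ne hC h (by omega))
        (fun h => cycleGraph_adj_mod_two_ne hC h (by omega))
  let f : Fin (n + 2) → V := fun p => if p.val % 2 = 0 then u p else y p
  have hf : Injective f := by
    intro p p' h
    simp only [f] at h
    split_ifs at h with hp hp'
    · exact hu_inj p p' (by omega) h
    · exact absurd (h ▸ hu_mem p) (disjoint_right.1 hAY (hyY p'))
    · exact absurd (h ▸ hyY p) (disjoint_left.1 hAY (hu_mem p'))
    · exact hy_inj p p' (by omega) (by omega) h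
  refine hasInducedCopy_cycleGraph_of_alternating hC ⟨f, hf⟩ (fun p r hpr hadj => ?_)
    (fun p r hp hr => ?_)
  · simp only [Embedding.coeFn_mk, f] at hadj
    split_ifs at hadj with hp hr
    · exact hAind (hu_mem p) (hu_mem r) (G.ne_of_adj hadj) hadj
    · omega
    · omega
    · exact hYind (hyY p) (hyY r) (G.ne_of_adj hadj) hadj
  · simp only [Embedding.coeFn_mk, f, if_neg (show p.val % 2 ≠ 0 by omega), if_pos hr]
    exact hyu p r hp hr

def neighborTraces [DecidableEq V] (G : SimpleGraph V) [DecidableRel G.Adj] (X Y : Finset V) :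
    Finset (Finset V) :=
  Y.image fun z => {x ∈ X | G.Adj z x}

theorem vcDim_neighborTraces_le [DecidableEq V] {G : SimpleGraph V} [DecidableRel G.Adj]
    {q k : ℕ} (hk : 2 ≤ k) (hG : CgeFree (2 * k) G) {X Y : Finset V} (c : V → Fin q)
    (hc : ∀ u ∈ X, ∀ v ∈ X, G.Adj u v → c u ≠ c v) (hYind : G.IsIndepSet Y)
    (hXY : Disjoint X Y) : (neighborTraces G X Y).vcDim ≤ q * k := by
  refine Finset.sup_le fun s hs => ?_
  have hs := mem_shatterer.1 hs
  by_contra! hlt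
  have hsX : s ⊆ X := by
    obtain ⟨_, hu, hsu⟩ := hs.exists_superset
    obtain ⟨z, -, rfl⟩ := mem_image.1 hu
    exact hsu.trans (filter_subset _ _)
  obtain ⟨B, hBs, hB⟩ := exists_subset_card_eq hlt
  obtain ⟨i, -, hi⟩ := exists_lt_card_fiber_of_mul_lt_card_of_maps_to (s := B) (t := univ)
    (f := c) (n := k) (fun _ _ => mem_univ _) (by simp [hB])
  obtain ⟨A, hAB, hA⟩ := exists_subset_card_eq hi
  have hAs : A ⊆ s := hAB.trans ((filter_subset _ _).trans hBs)
  have hAind : G.IsIndepSet A := fun u hu v hv _ hadj =>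
    hc u (hsX (hAs hu)) v (hsX (hAs hv)) hadj
      ((mem_filter.1 (hAB hu)).2.trans (mem_filter.1 (hAB hv)).2.symm)
  have hshat : ∀ T ⊆ A, ∃ z ∈ Y, ∀ x ∈ A, G.Adj z x ↔ x ∈ T := by
    intro T hT
    obtain ⟨_, hu, hAu⟩ := hs.mono_right hAs hT
    obtain ⟨z, hz, rfl⟩ := mem_image.1 hu
    refine ⟨z, hz, fun x hx => ?_⟩
    rw [← hAu]
    simp [hx, hsX (hAs hx)]
  exact hG _ (by omega) (hasInducedCopy_cycleGraph_of_shatters (by omega) hAind hYind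
    (disjoint_of_subset_left (hAs.trans hsX) hXY) hshat)

end

theorem stmt8_general {V : Type*} [DecidableEq V] (G : SimpleGraph V)
    [DecidableRel G.Adj] (t q : ℕ) (hteven : Even t) (ht : 4 ≤ t) (hq : 1 ≤ q)
    (hG : CgeFree t G) (X Y : Finset V)
    (hX : q * t / 2 ≤ X.card)
    (hcol : ∃ c : V → Fin q, ∀ u ∈ X, ∀ v ∈ X, G.Adj u v → c u ≠ c v)
    (hYind : ∀ u ∈ Y, ∀ v ∈ Y, ¬ G.Adj u v)
    (hXY : Disjoint X Y) :
    ∃ Y' ⊆ Y, Y.card ≤ Y'.card * X.card ^ (q * t / 2) ∧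
      ∀ u ∈ Y', ∀ v ∈ Y', ∀ x ∈ X, (G.Adj u x ↔ G.Adj v x) := by
  obtain ⟨c, hc⟩ := hcol
  obtain ⟨k, rfl⟩ := hteven
  rw [← two_mul] at hG
  rw [← two_mul, mul_left_comm, Nat.mul_div_cancel_left _ two_pos] at hX ⊢
  have hqk : 2 ≤ q * k := Nat.mul_le_mul hq (by omega : 2 ≤ k)
  have hvc := vcDim_neighborTraces_le (by omega) hG c hc (fun u hu v hv _ => hYind u hu v hv) hXY
  have htraces : #(neighborTraces G X Y) ≤ #X ^ (q * k) :=
    (card_le_sum_choose_of_vcDim_le (by simp [neighborTraces]) hvc).trans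
      (sum_range_choose_le_pow (by omega) hqk)
  obtain ⟨Y', hY'Y, hcard, hsame⟩ :=
    exists_subset_card_le_mul_card_image_of_eq Y fun z => {x ∈ X | G.Adj z x}
  refine ⟨Y', hY'Y, hcard.trans (Nat.mul_le_mul_left _ htraces), fun u hu v hv x hx => ?_⟩
  simpa [hx] using congrArg (x ∈ ·) (hsame u hu v hv)

theorem stmt8 {V : Type*} [Fintype V] [DecidableEq V] (G : SimpleGraph V)
    [DecidableRel G.Adj] (t q : ℕ) (hteven : Even t) (ht : 4 ≤ t) (hq : 1 ≤ q)
    (hG : CgeFree t G) (X Y : Finset V)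
    (hX : q * t / 2 ≤ X.card)
    (hcol : ∃ c : V → Fin q, ∀ u ∈ X, ∀ v ∈ X, G.Adj u v → c u ≠ c v)
    (hYind : ∀ u ∈ Y, ∀ v ∈ Y, ¬ G.Adj u v)
    (hXY : Disjoint X Y) :
    ∃ Y' ⊆ Y, Y.card ≤ Y'.card * X.card ^ (q * t / 2) ∧
      ∀ u ∈ Y', ∀ v ∈ Y', ∀ x ∈ X, (G.Adj u x ↔ G.Adj v x) :=
  stmt8_general G t q hteven ht hq hG X Y hX hcol hYind hXY
end

section
/- Let G be a graph with no induced cycle of length at least t (t ≥ 4 even) that does not contain K_{ℓ,ℓ} as a subgraph. Let X be a set of at least q·t/2 vertices such that G[X] is q-colorable, and let Y be an independent set disjoint from X in which every vertex has at least ℓ neighbors in X. Then |Y| < ℓ · |X|^{qt/2}. -/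
lemma sum_choose_le_pow (n d : ℕ) (hn : 2 ≤ n) (hd : 2 ≤ d) :
    ∑ i ∈ Finset.range (d + 1), n.choose i ≤ n ^ d := by
  obtain ⟨e, rfl⟩ : ∃ e, n = e + 2 := ⟨n - 2, by omega⟩
  induction d, hd using Nat.le_induction with
  | base =>
    have hdvd : 2 ∣ (e + 2) * (e + 2 - 1) := by
      have := (Nat.even_mul_succ_self (e + 1)).two_dvd
      have h3 : e + 2 - 1 = e + 1 := by omega
      rw [h3, Nat.mul_comm]
      simpa using this
    have h2 : (e + 2).choose 2 * 2 = (e + 2) * (e + 1) := by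
      rw [Nat.choose_two_right, Nat.div_mul_cancel hdvd]
      have h3 : e + 2 - 1 = e + 1 := by omega
      rw [h3]
    rw [Finset.sum_range_succ, Finset.sum_range_succ, Finset.sum_range_one,
      Nat.choose_zero_right, Nat.choose_one_right]
    nlinarith [h2]
  | succ d hd2 ih =>
    rw [Finset.sum_range_succ]
    have hch : (e + 2).choose (d + 1) ≤ (e + 1) * (e + 2) ^ d :=
      calc (e + 2).choose (d + 1) ≤ (e + 2).descFactorial (d + 1) :=
            Nat.choose_le_descFactorial _ _
        _ = (e + 2 - d) * (e + 2).descFactorial d := Nat.descFactorial_succ _ _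
        _ ≤ (e + 1) * (e + 2) ^ d :=
            Nat.mul_le_mul (by omega) (Nat.descFactorial_le_pow _ _)
    calc ∑ i ∈ Finset.range (d + 1), (e + 2).choose i + (e + 2).choose (d + 1)
        ≤ (e + 2) ^ d + (e + 1) * (e + 2) ^ d := Nat.add_le_add ih hch
      _ = (e + 2) ^ (d + 1) := by ring

lemma core_no_cycle {V : Type*} [DecidableEq V] (G : SimpleGraph V) [DecidableRel G.Adj]
    (m : ℕ) (hm : 2 ≤ m) (X Y : Finset V) (hXY : Disjoint X Y)
    (hYind : ∀ u ∈ Y, ∀ v ∈ Y, ¬ G.Adj u v)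
    (hGc : ¬ HasInducedCopy (SimpleGraph.cycleGraph (2 * m)) G)
    (s : Finset V) (hsX : s ⊆ X) (hcard : s.card = m + 1)
    (hnonadj : ∀ u ∈ s, ∀ v ∈ s, ¬ G.Adj u v)
    (hsh : ∀ T ⊆ s, ∃ y ∈ Y, s ∩ (X.filter (fun v => G.Adj y v)) = T) :
    False := by
  -- enumerate s
  obtain ⟨x, hxinj, hxmem⟩ : ∃ x : Fin (m + 1) → V, Function.Injective x ∧ ∀ i, x i ∈ s :=
    ⟨fun i => ((s.equivFinOfCardEq hcard).symm i : V),
      fun i j h => (s.equivFinOfCardEq hcard).symm.injective (Subtype.ext h),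
      fun i => ((s.equivFinOfCardEq hcard).symm i).2⟩
  obtain ⟨nxt, hnxt⟩ : ∃ nxt : Fin m → Fin m,
      ∀ i : Fin m, (nxt i).1 = if i.1 + 1 = m then 0 else i.1 + 1 := by
    refine ⟨fun i => ⟨(i.1 + 1) % m, Nat.mod_lt _ (by omega)⟩, fun i => ?_⟩
    show (i.1 + 1) % m = _
    split
    · next h => rw [h, Nat.mod_self]
    · next h => exact Nat.mod_eq_of_lt (by have := i.isLt; omega)
  obtain ⟨T, hT⟩ : ∃ T : Fin m → Finset V, ∀ i : Fin m,
      (T i ⊆ s) ∧ (∀ j : Fin m, x (Fin.castSucc j) ∈ T i ↔ (j = i ∨ j = nxt i)) ∧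
      (x (Fin.last m) ∈ T i ↔ i.1 + 1 = m) := by
    refine ⟨fun i => if i.1 + 1 = m
      then {x (Fin.castSucc i), x (Fin.castSucc (nxt i)), x (Fin.last m)}
      else {x (Fin.castSucc i), x (Fin.castSucc (nxt i))}, fun i => ?_⟩
    dsimp only
    have hlast : ∀ j : Fin m, x (Fin.castSucc j) ≠ x (Fin.last m) := by
      intro j h
      have h2 := congrArg Fin.val (hxinj h)
      simp only [Fin.coe_castSucc, Fin.val_last] at h2
      have := j.isLt; omega
    have hcs : ∀ j j' : Fin m, x (Fin.castSucc j) = x (Fin.castSucc j') ↔ j = j' := by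
      intro j j'
      constructor
      · intro h; exact Fin.castSucc_injective m (hxinj h)
      · intro h; rw [h]
    refine ⟨?_, ?_, ?_⟩
    · intro v hv
      split at hv <;> simp only [Finset.mem_insert, Finset.mem_singleton] at hv
      · rcases hv with h | h | h <;> subst h <;> exact hxmem _
      · rcases hv with h | h <;> subst h <;> exact hxmem _
    · intro j
      split
      · simp only [Finset.mem_insert, Finset.mem_singleton, hcs, hlast j, or_false]
      · simp only [Finset.mem_insert, Finset.mem_singleton, hcs]
    · split
      · next h => exact iff_of_true (by simp) h
      · next h =>
          simp only [Finset.mem_insert, Finset.mem_singleton]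
          constructor
          · rintro (h' | h') <;> exact absurd h'.symm (hlast _)
          · intro h'; exact absurd h' h
  -- witnesses
  have hw : ∀ i : Fin m, ∃ y ∈ Y, s ∩ (X.filter fun v => G.Adj y v) = T i :=
    fun i => hsh (T i) (hT i).1
  choose y hyY hyT using hw
  have hyadj : ∀ (i : Fin m) (v : V), v ∈ s → (G.Adj (y i) v ↔ v ∈ T i) := by
    intro i v hv
    constructor
    · intro h
      rw [← hyT i]
      exact Finset.mem_inter.mpr ⟨hv, Finset.mem_filter.mpr ⟨hsX hv, h⟩⟩
    · intro h
      rw [← hyT i] at h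
      exact (Finset.mem_filter.mp (Finset.mem_inter.mp h).2).2
  have hynX : ∀ i, y i ∉ X := fun i h => Finset.disjoint_left.mp hXY h (hyY i)
  have hyinj : Function.Injective y := by
    intro i j hij
    have hTij : T i = T j := by rw [← hyT i, ← hyT j, hij]
    by_contra hne
    have h1 : x (Fin.castSucc i) ∈ T j := by
      rw [← hTij]; exact ((hT i).2.1 i).mpr (Or.inl rfl)
    have h2 : x (Fin.castSucc j) ∈ T i := by
      rw [hTij]; exact ((hT j).2.1 j).mpr (Or.inl rfl)
    rcases ((hT j).2.1 i).mp h1 with h | h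
    · exact hne h
    rcases ((hT i).2.1 j).mp h2 with h' | h'
    · exact hne h'.symm
    have h3 : (i.1 + 1 = m) ↔ (j.1 + 1 = m) := by
      rw [← (hT i).2.2, ← (hT j).2.2, hTij]
    have hv1 : i.1 = if j.1 + 1 = m then 0 else j.1 + 1 := by rw [h, hnxt]
    have hv2 : j.1 = if i.1 + 1 = m then 0 else i.1 + 1 := by rw [h', hnxt]
    have hi := i.isLt; have hj := j.isLt
    have hne' : i.1 ≠ j.1 := fun hh => hne (Fin.ext hh)
    split at hv1 <;> split at hv2 <;> omega
  -- the embedding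
  have hf2 : ∀ k : Fin (2 * m), k.1 / 2 < m := fun k => by have := k.isLt; omega
  obtain ⟨f, hfe, hfo⟩ : ∃ f : Fin (2 * m) → V,
      (∀ k : Fin (2 * m), k.1 % 2 = 0 → f k = x (Fin.castSucc ⟨k.1 / 2, hf2 k⟩)) ∧
      (∀ k : Fin (2 * m), k.1 % 2 ≠ 0 → f k = y ⟨k.1 / 2, hf2 k⟩) :=
    ⟨fun k => if h : k.1 % 2 = 0 then x (Fin.castSucc ⟨k.1 / 2, hf2 k⟩) else y ⟨k.1 / 2, hf2 k⟩,
      fun k h => dif_pos h, fun k h => dif_neg h⟩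
  have hfinj : Function.Injective f := by
    intro k k' h
    have hk := k.isLt; have hk' := k'.isLt
    by_cases h1 : k.1 % 2 = 0 <;> by_cases h2 : k'.1 % 2 = 0
    · rw [hfe k h1, hfe k' h2] at h
      have h3 := congrArg Fin.val (Fin.castSucc_injective m (hxinj h))
      simp only at h3
      exact Fin.ext (by omega)
    · rw [hfe k h1, hfo k' h2] at h
      have hx : x (Fin.castSucc ⟨k.1 / 2, hf2 k⟩) ∈ X := hsX (hxmem _)
      rw [h] at hx
      exact absurd hx (hynX _)
    · rw [hfo k h1, hfe k' h2] at h
      have hx : x (Fin.castSucc ⟨k'.1 / 2, hf2 k'⟩) ∈ X := hsX (hxmem _)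
      rw [← h] at hx
      exact absurd hx (hynX _)
    · rw [hfo k h1, hfo k' h2] at h
      have h3 := congrArg Fin.val (hyinj h)
      simp only at h3
      exact Fin.ext (by omega)
  haveI : NeZero (2 * m) := ⟨by omega⟩
  have hone : ((1 : Fin (2 * m)) : ℕ) = 1 := by
    rw [Fin.val_one']; exact Nat.mod_eq_of_lt (by omega)
  have hsub : ∀ u v : Fin (2 * m), ((u - v).1 = 1) ↔
      ((v.1 + 1 = 2 * m ∧ u.1 = 0) ∨ (v.1 + 1 < 2 * m ∧ u.1 = v.1 + 1)) := by
    intro u v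
    have hv := v.isLt; have hu := u.isLt
    constructor
    · intro h
      have h2 : u = 1 + v := by
        have h4 : u - v = 1 := Fin.ext (by rw [h, hone])
        rwa [sub_eq_iff_eq_add] at h4
      have h3 : u.1 = (1 + v.1) % (2 * m) := by rw [h2, Fin.val_add, hone]
      by_cases hc : v.1 + 1 = 2 * m
      · have h5 : (1 + v.1) % (2 * m) = 0 := by rw [Nat.add_comm, hc, Nat.mod_self]
        omega
      · have h5 : (1 + v.1) % (2 * m) = v.1 + 1 := by
          rw [Nat.add_comm]; exact Nat.mod_eq_of_lt (by omega)
        omega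
    · intro h
      have h2 : u = 1 + v := by
        apply Fin.ext
        rw [Fin.val_add, hone, Nat.add_comm]
        rcases h with ⟨ha, hb⟩ | ⟨ha, hb⟩
        · rw [ha, Nat.mod_self]; exact hb
        · rw [Nat.mod_eq_of_lt ha]; exact hb
      rw [h2, add_sub_cancel_right]
      exact hone
  have hadj : ∀ k k' : Fin (2 * m), G.Adj (f k) (f k') ↔
      (SimpleGraph.cycleGraph (2 * m)).Adj k k' := by
    intro k k'
    rw [SimpleGraph.cycleGraph_adj', hsub, hsub]
    have hk := k.isLt; have hk' := k'.isLt
    by_cases h1 : k.1 % 2 = 0 <;> by_cases h2 : k'.1 % 2 = 0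
    · rw [hfe k h1, hfe k' h2]
      constructor
      · intro h; exact absurd h (hnonadj _ (hxmem _) _ (hxmem _))
      · intro h; exfalso; omega
    · rw [hfe k h1, hfo k' h2, G.adj_comm, hyadj _ _ (hxmem _), (hT _).2.1]
      have e1 : ((⟨k.1 / 2, hf2 k⟩ : Fin m) = ⟨k'.1 / 2, hf2 k'⟩) ↔ k.1 / 2 = k'.1 / 2 :=
        Fin.mk_eq_mk
      have e2 : ((⟨k.1 / 2, hf2 k⟩ : Fin m) = nxt ⟨k'.1 / 2, hf2 k'⟩) ↔
          (k.1 / 2 = if k'.1 / 2 + 1 = m then 0 else k'.1 / 2 + 1) := by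
        rw [Fin.ext_iff, hnxt]
      rw [e1, e2]
      by_cases hc : k'.1 / 2 + 1 = m
      · rw [if_pos hc]; omega
      · rw [if_neg hc]; omega
    · rw [hfo k h1, hfe k' h2, hyadj _ _ (hxmem _), (hT _).2.1]
      have e1 : ((⟨k'.1 / 2, hf2 k'⟩ : Fin m) = ⟨k.1 / 2, hf2 k⟩) ↔ k'.1 / 2 = k.1 / 2 :=
        Fin.mk_eq_mk
      have e2 : ((⟨k'.1 / 2, hf2 k'⟩ : Fin m) = nxt ⟨k.1 / 2, hf2 k⟩) ↔
          (k'.1 / 2 = if k.1 / 2 + 1 = m then 0 else k.1 / 2 + 1) := by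
        rw [Fin.ext_iff, hnxt]
      rw [e1, e2]
      by_cases hc : k.1 / 2 + 1 = m
      · rw [if_pos hc]; omega
      · rw [if_neg hc]; omega
    · rw [hfo k h1, hfo k' h2]
      constructor
      · intro h; exact absurd h (hYind _ (hyY _) _ (hyY _))
      · intro h; exfalso; omega
  exact hGc ⟨⟨f, hfinj⟩, hadj⟩

theorem stmt9 {V : Type*} [Fintype V] [DecidableEq V] (G : SimpleGraph V)
    [DecidableRel G.Adj] (t q ℓ : ℕ) (hteven : Even t) (ht : 4 ≤ t) (hq : 1 ≤ q)
    (hℓ : 1 ≤ ℓ) (hG : CgeFree t G) (hK : ¬ ContainsKll G ℓ) (X Y : Finset V)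
    (hX : q * t / 2 ≤ X.card)
    (hcol : ∃ c : V → Fin q, ∀ u ∈ X, ∀ v ∈ X, G.Adj u v → c u ≠ c v)
    (hYind : ∀ u ∈ Y, ∀ v ∈ Y, ¬ G.Adj u v)
    (hXY : Disjoint X Y)
    (hdeg : ∀ u ∈ Y, ℓ ≤ (X.filter (fun x => G.Adj u x)).card) :
    Y.card < ℓ * X.card ^ (q * t / 2) := by
  obtain ⟨m, rfl⟩ := hteven
  have hm2 : 2 ≤ m := by omega
  have hd : q * (m + m) / 2 = q * m := by
    rw [show q * (m + m) = q * m * 2 by ring]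
    exact Nat.mul_div_cancel _ (by norm_num)
  rw [hd] at hX ⊢
  have hqm2 : 2 ≤ q * m := le_trans hm2 (Nat.le_mul_of_pos_left m hq)
  have hn2 : 2 ≤ X.card := le_trans hqm2 hX
  set tr : V → Finset V := fun u => X.filter fun v => G.Adj u v with htr
  set 𝒜 : Finset (Finset V) := Y.image tr with h𝒜
  -- fiber bound
  have hfib : ∀ T : Finset V, (Y.filter fun y => tr y = T).card ≤ ℓ - 1 := by
    intro T
    by_contra hcon
    push_neg at hcon
    have hℓle : ℓ ≤ (Y.filter fun y => tr y = T).card := by omega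
    obtain ⟨A, hA, hAcard⟩ := Finset.exists_subset_card_eq hℓle
    have hAY : A ⊆ Y := hA.trans (Finset.filter_subset _ _)
    obtain ⟨y₀, hy₀⟩ := Finset.card_pos.mp (by omega : 0 < A.card)
    have hy₀T : tr y₀ = T := (Finset.mem_filter.mp (hA hy₀)).2
    have hTcard : ℓ ≤ T.card := by rw [← hy₀T]; exact hdeg y₀ (hAY hy₀)
    obtain ⟨B, hBT, hBcard⟩ := Finset.exists_subset_card_eq hTcard
    have hTX : T ⊆ X := by rw [← hy₀T]; exact Finset.filter_subset _ _
    apply hK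
    refine ⟨A, B, ?_, hAcard, hBcard, ?_⟩
    · exact Finset.disjoint_left.mpr fun a haA haB =>
        Finset.disjoint_left.mp hXY (hTX (hBT haB)) (hAY haA)
    · intro a ha b hb
      have hat : tr a = T := (Finset.mem_filter.mp (hA ha)).2
      have hb' : b ∈ tr a := by rw [hat]; exact hBT hb
      exact (Finset.mem_filter.mp hb').2
  -- shatterer bound
  have hsub𝒜 : 𝒜.shatterer ⊆ (Finset.range (q * m + 1)).biUnion fun i => X.powersetCard i := by
    intro s hs
    have hsh := Finset.mem_shatterer.mp hs
    obtain ⟨u, hu𝒜, hsu⟩ := hsh.exists_superset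
    obtain ⟨y0, hy0Y, rfl⟩ := Finset.mem_image.mp hu𝒜
    have hsX : s ⊆ X := hsu.trans (Finset.filter_subset _ _)
    have hscard : s.card ≤ q * m := by
      by_contra hbig
      push_neg at hbig
      obtain ⟨c, hc⟩ := hcol
      obtain ⟨b, -, hb⟩ := Finset.exists_lt_card_fiber_of_mul_lt_card_of_maps_to
        (fun a _ => Finset.mem_univ (c a))
        (show (Finset.univ : Finset (Fin q)).card * m < s.card by simpa using hbig)
      obtain ⟨s', hs'f, hs'card⟩ :=
        Finset.exists_subset_card_eq (show m + 1 ≤ (s.filter fun v => c v = b).card from hb)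
      have hs's : s' ⊆ s := hs'f.trans (Finset.filter_subset _ _)
      refine core_no_cycle G m hm2 X Y hXY hYind (hG (2 * m) (by omega)) s'
        (hs's.trans hsX) hs'card ?_ ?_
      · intro u hu v hv hadj
        have hcu := (Finset.mem_filter.mp (hs'f hu)).2
        have hcv := (Finset.mem_filter.mp (hs'f hv)).2
        exact hc u (hsX (hs's hu)) v (hsX (hs's hv)) hadj (by rw [hcu, hcv])
      · intro T hT
        obtain ⟨u, hu, hTu⟩ := (hsh.mono_right hs's) hT
        obtain ⟨y, hyY, rfl⟩ := Finset.mem_image.mp hu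
        exact ⟨y, hyY, hTu⟩
    exact Finset.mem_biUnion.mpr ⟨s.card, Finset.mem_range.mpr (by omega),
      Finset.mem_powersetCard.mpr ⟨hsX, rfl⟩⟩
  have h𝒜card : 𝒜.card ≤ X.card ^ (q * m) :=
    calc 𝒜.card ≤ 𝒜.shatterer.card := Finset.card_le_card_shatterer _
      _ ≤ ((Finset.range (q * m + 1)).biUnion fun i => X.powersetCard i).card :=
          Finset.card_le_card hsub𝒜
      _ ≤ ∑ i ∈ Finset.range (q * m + 1), (X.powersetCard i).card := Finset.card_biUnion_le
      _ = ∑ i ∈ Finset.range (q * m + 1), X.card.choose i := by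
          simp [Finset.card_powersetCard]
      _ ≤ X.card ^ (q * m) := sum_choose_le_pow _ _ hn2 hqm2
  have hYcard : Y.card ≤ 𝒜.card * (ℓ - 1) := by
    rw [Finset.card_eq_sum_card_fiberwise
      (fun y (hy : y ∈ Y) => Finset.mem_image_of_mem tr hy)]
    refine le_trans (Finset.sum_le_sum fun T _ => hfib T) ?_
    rw [Finset.sum_const, smul_eq_mul]
  have hpow : 0 < X.card ^ (q * m) := pow_pos (by omega) _
  calc Y.card ≤ 𝒜.card * (ℓ - 1) := hYcard
    _ ≤ X.card ^ (q * m) * (ℓ - 1) := Nat.mul_le_mul_right _ h𝒜card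
    _ < X.card ^ (q * m) * ℓ := by
        exact mul_lt_mul_of_pos_left (by omega) hpow
    _ = ℓ * X.card ^ (q * m) := Nat.mul_comm _ _
end

section
/- Let G be a graph with no induced cycle on at least t vertices, and let K be a minimal clique minor in G with at least 3 branch sets. Then for each branch set K ∈ 𝒦, every shortest path in the induced subgraph G[K] has fewer than t vertices (equivalently, G[K] has diameter less than t−1). -/
/-- `𝒦` is a clique minor of `G`: a family of pairwise disjoint branch sets,
each inducing a connected subgraph, with an edge between every two of them. -/
def IsCliqueMinor {V : Type*} (G : SimpleGraph V) (𝒦 : Finset (Finset V)) : Prop :=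
  (∀ K ∈ 𝒦, (G.induce (K : Set V)).Connected) ∧
  (∀ K ∈ 𝒦, ∀ K' ∈ 𝒦, K ≠ K' → Disjoint K K') ∧
  (∀ K ∈ 𝒦, ∀ K' ∈ 𝒦, K ≠ K' → ∃ u ∈ K, ∃ v ∈ K', G.Adj u v)

/-- `𝒦` is a minimal clique minor: no branch set can be replaced by a proper
subset while keeping the clique-minor property. -/
def IsMinimalCliqueMinor {V : Type*} [DecidableEq V] (G : SimpleGraph V)
    (𝒦 : Finset (Finset V)) : Prop :=
  IsCliqueMinor G 𝒦 ∧
  ∀ K ∈ 𝒦, ∀ K' : Finset V, K' ⊂ K → ¬ IsCliqueMinor G (insert K' (𝒦.erase K))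

/-!
Suppose `u, v` realise a diameter `d ≥ t - 1` of `G[K]`. Every vertex of `K` is at distance at
most `d` from `v`, so a shortest path from `v` to any `x ≠ u` avoids `u`, and `K \ {u}` is still
connected.
By minimality `K \ {u}` cannot replace `K`, so some other branch set `L` sees `K` only at `u`;
likewise some `M` sees `K` only at `v`, and `L ≠ M`. A shortest `u`–`v` path of `G[K]` and a
shortest `u`–`v` path through `L ∪ M` then close up to an induced cycle of length at least
`d + 2 > t`.
-/

namespace SimpleGraph

variable {V W : Type*} {G : SimpleGraph V}

lemma Walk.dist_getVert_getVert_of_length_eq_dist {u v : V} {w : G.Walk u v}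
    (hw : w.length = G.dist u v) {i j : ℕ} (hij : i ≤ j) (hj : j ≤ w.length) :
    G.dist (w.getVert i) (w.getVert j) = j - i := by
  have h := length_eq_dist_of_subwalk hw
    ((isSubwalk_take (w.drop i) (j - i)).trans (isSubwalk_drop w i))
  rw [take_length, drop_length, drop_getVert, Nat.add_sub_cancel' hij] at h
  omega

lemma Walk.eq_of_mem_support_of_length_eq_dist {b x a : V} {w : G.Walk b x}
    (hw : w.length = G.dist b x) (ha : a ∈ w.support) (hfar : G.dist b x ≤ G.dist b a) :
    a = x := by
  obtain ⟨n, rfl, hn⟩ := mem_support_iff_exists_getVert.mp ha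
  have h := dist_getVert_getVert_of_length_eq_dist hw (Nat.zero_le n) hn
  rw [getVert_zero] at h
  rw [show n = w.length by omega, getVert_length]

structure IsInducedPath (G : SimpleGraph V) (n : ℕ) (p : ℕ → V) : Prop where
  injOn : Set.InjOn p (Set.Iic n)
  adj_iff : ∀ i ≤ n, ∀ j ≤ n, G.Adj (p i) (p j) ↔ j = i + 1 ∨ i = j + 1

lemma Walk.isInducedPath_getVert {u v : V} (w : G.Walk u v) (hw : w.length = G.dist u v) :
    G.IsInducedPath w.length w.getVert where
  injOn i hi j hj hij := by
    rcases le_total i j with h | h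
    · have hd := dist_getVert_getVert_of_length_eq_dist hw h hj
      rw [hij, dist_self] at hd
      omega
    · have hd := dist_getVert_getVert_of_length_eq_dist hw h hi
      rw [hij, dist_self] at hd
      omega
  adj_iff i hi j hj := by
    rw [← dist_eq_one_iff_adj]
    rcases le_total i j with h | h
    · rw [dist_getVert_getVert_of_length_eq_dist hw h hj]
      omega
    · rw [dist_comm, dist_getVert_getVert_of_length_eq_dist hw h hi]
      omega

lemma IsInducedPath.apply_ne_apply {n : ℕ} {p : ℕ → V} (hp : G.IsInducedPath n p) {i j : ℕ}
    (hi : i ≤ n) (hj : j ≤ n) (hij : i ≠ j) : p i ≠ p j :=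
  fun h => hij (hp.injOn hi hj h)

lemma IsInducedPath.map {G' : SimpleGraph W} (f : G ↪g G') {n : ℕ} {p : ℕ → V}
    (hp : G.IsInducedPath n p) : G'.IsInducedPath n (f ∘ p) where
  injOn := f.injective.comp_injOn hp.injOn
  adj_iff i hi j hj := f.map_adj_iff.trans (hp.adj_iff i hi j hj)

lemma cycleGraph_adj_iff_val {n : ℕ} (hn : 2 ≤ n) (a b : Fin n) :
    (cycleGraph n).Adj a b ↔ a.val = b.val + 1 ∨ b.val = a.val + 1 ∨
      (a.val = 0 ∧ b.val = n - 1) ∨ (b.val = 0 ∧ a.val = n - 1) := by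
  have sub_eq_one (x y : Fin n) :
      (x - y).val = 1 ↔ x.val = y.val + 1 ∨ (x.val = 0 ∧ y.val = n - 1) := by
    rcases le_or_gt y x with h | h
    · rw [Fin.coe_sub_iff_le.mpr h]
      omega
    · rw [Fin.coe_sub_iff_lt.mpr h]
      omega
  rw [cycleGraph_adj', sub_eq_one, sub_eq_one]
  tauto

lemma hasInducedCopy_cycleGraph_of_adj_iff {n : ℕ} (hn : 2 ≤ n) {g : ℕ → V}
    (hinj : Set.InjOn g (Set.Iio n))
    (hadj : ∀ i < n, ∀ j < n, G.Adj (g i) (g j) ↔ i = j + 1 ∨ j = i + 1 ∨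
      (i = 0 ∧ j = n - 1) ∨ (j = 0 ∧ i = n - 1)) :
    HasInducedCopy (cycleGraph n) G :=
  ⟨⟨fun k => g k, fun a b h => Fin.ext (hinj a.isLt b.isLt h)⟩, fun a b =>
    (hadj a a.isLt b b.isLt).trans (cycleGraph_adj_iff_val hn a b).symm⟩

lemma IsInducedPath.hasInducedCopy_cycleGraph {n₁ n₂ : ℕ} {p q : ℕ → V}
    (hp : G.IsInducedPath n₁ p) (hq : G.IsInducedPath n₂ q) (h₁ : 2 ≤ n₁) (h₂ : 2 ≤ n₂)
    (hstart : p 0 = q 0) (hend : p n₁ = q n₂)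
    (hne : ∀ i j, 0 < i → i < n₁ → 0 < j → j < n₂ → p i ≠ q j)
    (hnadj : ∀ i j, 0 < i → i < n₁ → 0 < j → j < n₂ → ¬ G.Adj (p i) (q j)) :
    HasInducedCopy (cycleGraph (n₁ + n₂)) G := by
  set g : ℕ → V := fun k => if k ≤ n₁ then p k else q (n₁ + n₂ - k)
  have hg_le : ∀ k ≤ n₁, g k = p k := fun k hk => if_pos hk
  have hg_gt : ∀ k, n₁ < k → g k = q (n₁ + n₂ - k) := fun k hk => if_neg (by omega)
  have hp_inj {i j : ℕ} (hi : i ≤ n₁) (hj : j ≤ n₁) (h : p i = p j) : i = j :=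
    hp.injOn hi hj h
  have hq_inj {i j : ℕ} (hi : i ≤ n₂) (hj : j ≤ n₂) (h : q i = q j) : i = j :=
    hq.injOn hi hj h
  have hmixed_ne : ∀ i ≤ n₁, ∀ j, 0 < j → j < n₂ → p i ≠ q j := by
    intro i hi j hj₀ hj h
    rcases Nat.eq_zero_or_pos i with rfl | hi₀
    · have := hq_inj (Nat.zero_le _) hj.le (hstart ▸ h)
      omega
    rcases hi.eq_or_lt with rfl | hi
    · have := hq_inj le_rfl hj.le (hend ▸ h)
      omega
    exact hne i j hi₀ hi hj₀ hj h
  have hmixed_adj : ∀ i ≤ n₁, ∀ j, 0 < j → j < n₂ →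
      (G.Adj (p i) (q j) ↔ (i = 0 ∧ j = 1) ∨ (i = n₁ ∧ j = n₂ - 1)) := by
    intro i hi j hj₀ hj
    rcases Nat.eq_zero_or_pos i with rfl | hi₀
    · rw [hstart, hq.adj_iff _ (Nat.zero_le _) _ hj.le]
      omega
    rcases hi.eq_or_lt with rfl | hi
    · rw [hend, hq.adj_iff _ le_rfl _ hj.le]
      omega
    exact iff_of_false (hnadj i j hi₀ hi hj₀ hj) (by omega)
  refine hasInducedCopy_cycleGraph_of_adj_iff (g := g) (by omega) ?_ ?_
  · intro k₁ hk₁ k₂ hk₂ h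
    simp only [Set.mem_Iio] at hk₁ hk₂
    rcases le_or_gt k₁ n₁ with hA | hA <;> rcases le_or_gt k₂ n₁ with hB | hB
    · rw [hg_le _ hA, hg_le _ hB] at h
      exact hp_inj hA hB h
    · rw [hg_le _ hA, hg_gt _ hB] at h
      exact absurd h (hmixed_ne _ hA _ (by omega) (by omega))
    · rw [hg_gt _ hA, hg_le _ hB] at h
      exact absurd h.symm (hmixed_ne _ hB _ (by omega) (by omega))
    · rw [hg_gt _ hA, hg_gt _ hB] at h
      have := hq_inj (by omega) (by omega) h
      omega
  · intro i hi j hj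
    rcases le_or_gt i n₁ with hA | hA <;> rcases le_or_gt j n₁ with hB | hB
    · rw [hg_le _ hA, hg_le _ hB, hp.adj_iff _ hA _ hB]
      omega
    · rw [hg_le _ hA, hg_gt _ hB, hmixed_adj _ hA _ (by omega) (by omega)]
      omega
    · rw [hg_gt _ hA, hg_le _ hB, G.adj_comm, hmixed_adj _ hB _ (by omega) (by omega)]
      omega
    · rw [hg_gt _ hA, hg_gt _ hB, hq.adj_iff _ (by omega) _ (by omega)]
      omega

lemma connected_induce_diff_singleton {S : Set V} (hS : (G.induce S).Connected) {a b : S}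
    (hab : a ≠ b) (hfar : ∀ x, (G.induce S).dist b x ≤ (G.induce S).dist b a) :
    (G.induce (S \ {a.1})).Connected := by
  refine induce_connected_of_patches b.1 ⟨b.2, fun h => hab (Subtype.ext h).symm⟩
    fun {x} hx => ?_
  obtain ⟨w, hw⟩ := hS.exists_walk_length_eq_dist b ⟨x, hx.1⟩
  let w' := w.map (Embedding.induce S).toHom
  refine ⟨{y | y ∈ w'.support}, ?_, w'.start_mem_support, w'.end_mem_support,
    w'.connected_induce_support.preconnected _ _⟩
  intro y hy
  rw [Set.mem_ofPred_eq, Walk.support_map, List.mem_map] at hy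
  obtain ⟨y, hy, rfl⟩ := hy
  refine ⟨y.2, fun hya => hx.2 ?_⟩
  obtain rfl := Walk.eq_of_mem_support_of_length_eq_dist hw hy (Subtype.ext hya ▸ hfar ⟨x, hx.1⟩)
  exact hya

lemma exists_hasInducedCopy_cycleGraph_of_geodesic {K R : Set V} (hKR : Disjoint K R)
    (hR : (G.induce R).Connected) {u v : K} (huv : 2 ≤ (G.induce K).dist u v)
    (hu : ∃ z ∈ R, G.Adj u z) (hv : ∃ z ∈ R, G.Adj v z)
    (honly : ∀ x ∈ K, ∀ z ∈ R, G.Adj x z → x = u ∨ x = v) :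
    ∃ n, (G.induce K).dist u v + 2 ≤ n ∧ HasInducedCopy (cycleGraph n) G := by
  obtain ⟨zu, hzu, hadju⟩ := hu
  obtain ⟨zv, hzv, hadjv⟩ := hv
  set T : Set V := {u.1} ∪ R ∪ {v.1}
  have hT : (G.induce T).Connected :=
    have hRu := connected_induce_union (s := {u.1}) .of_subsingleton hR.preconnected rfl hzu hadju
    connected_induce_union (t := {v.1}) hRu.preconnected .of_subsingleton (Or.inr hzv) rfl
      hadjv.symm
  have huT : u.1 ∈ T := Or.inl (Or.inl rfl)
  have hvT : v.1 ∈ T := Or.inr rfl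
  obtain ⟨P, hP⟩ :=
    (Reachable.of_dist_ne_zero (by omega : (G.induce K).dist u v ≠ 0)).exists_walk_length_eq_dist
  obtain ⟨Q, hQ⟩ := hT.exists_walk_length_eq_dist ⟨u, huT⟩ ⟨v, hvT⟩
  have hp := (P.isInducedPath_getVert hP).map (Embedding.induce K)
  have hq := (Q.isInducedPath_getVert hQ).map (Embedding.induce T)
  have hQ₂ : 2 ≤ Q.length := by
    have hne : (⟨u, huT⟩ : T) ≠ ⟨v, hvT⟩ := fun h => by
      obtain rfl : u = v := Subtype.ext (by simpa using h)
      simp at huv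
    have hnadj : ¬ (G.induce T).Adj ⟨u, huT⟩ ⟨v, hvT⟩ := fun h => by
      have : (G.induce K).Adj u v := h
      rw [← dist_eq_one_iff_adj] at this
      omega
    rw [hQ]
    exact hT.one_lt_dist_of_ne_of_not_adj hne hnadj
  have hQR : ∀ j, 0 < j → j < Q.length → (Q.getVert j : V) ∈ R := by
    intro j hj₀ hj
    have hu' : (Q.getVert j : V) ≠ u := by
      simpa using hq.apply_ne_apply hj.le (Nat.zero_le _) (by omega)
    have hv' : (Q.getVert j : V) ≠ v := by
      simpa using hq.apply_ne_apply hj.le le_rfl (by omega)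
    rcases (Q.getVert j).2 with (h | h) | h
    · exact absurd h hu'
    · exact h
    · exact absurd h hv'
  refine ⟨P.length + Q.length, by omega, hp.hasInducedCopy_cycleGraph hq (by omega) hQ₂
    (by simp) (by simp) ?_ ?_⟩
  · intro i j _ _ hj₀ hj
    exact hKR.ne_of_mem (P.getVert i).2 (hQR j hj₀ hj)
  · intro i j hi₀ hi hj₀ hj hadj
    rcases honly _ (P.getVert i).2 _ (hQR j hj₀ hj) hadj with h | h
    · exact hp.apply_ne_apply hi.le (Nat.zero_le _) (by omega) (by simpa using h)
    · exact hp.apply_ne_apply hi.le le_rfl (by omega) (by simpa using h)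

end SimpleGraph

section CliqueMinor

variable {V : Type*} [DecidableEq V] {G : SimpleGraph V} {𝒦 : Finset (Finset V)}

lemma IsCliqueMinor.replace (h𝒦 : IsCliqueMinor G 𝒦) {K K' : Finset V} (hK : K ∈ 𝒦)
    (hK' : K' ⊆ K) (hconn : (G.induce (K' : Set V)).Connected)
    (hadj : ∀ L ∈ 𝒦, L ≠ K → ∃ x ∈ K', ∃ z ∈ L, G.Adj x z) :
    IsCliqueMinor G (insert K' (𝒦.erase K)) := by
  obtain ⟨hconn𝒦, hdisj, hadj𝒦⟩ := h𝒦
  have hmem {L : Finset V} (hL : L ∈ 𝒦.erase K) : L ∈ 𝒦 ∧ L ≠ K :=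
    ⟨Finset.mem_of_mem_erase hL, Finset.ne_of_mem_erase hL⟩
  refine ⟨?_, ?_, ?_⟩
  · intro A hA
    rcases Finset.mem_insert.mp hA with rfl | hA'
    · exact hconn
    · exact hconn𝒦 A (hmem hA').1
  · intro A hA B hB hAB
    rcases Finset.mem_insert.mp hA with rfl | hA' <;> rcases Finset.mem_insert.mp hB with rfl | hB'
    · exact absurd rfl hAB
    · exact (hdisj K hK B (hmem hB').1 (hmem hB').2.symm).mono_left hK'
    · exact (hdisj A (hmem hA').1 K hK (hmem hA').2).mono_right hK'
    · exact hdisj A (hmem hA').1 B (hmem hB').1 hAB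
  · intro A hA B hB hAB
    rcases Finset.mem_insert.mp hA with rfl | hA' <;> rcases Finset.mem_insert.mp hB with rfl | hB'
    · exact absurd rfl hAB
    · exact hadj B (hmem hB').1 (hmem hB').2
    · obtain ⟨x, hx, z, hz, hxz⟩ := hadj A (hmem hA').1 (hmem hA').2
      exact ⟨z, hz, x, hx, hxz.symm⟩
    · exact hadj𝒦 A (hmem hA').1 B (hmem hB').1 hAB

lemma IsMinimalCliqueMinor.exists_adj_only_at (hmin : IsMinimalCliqueMinor G 𝒦) {K : Finset V}
    (hK : K ∈ 𝒦) {a : V} (ha : a ∈ K) (hconn : (G.induce (K.erase a : Set V)).Connected) :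
    ∃ L ∈ 𝒦, L ≠ K ∧ (∃ z ∈ L, G.Adj a z) ∧ ∀ x ∈ K, ∀ z ∈ L, G.Adj x z → x = a := by
  by_contra! h
  refine hmin.2 K hK _ (Finset.erase_ssubset ha) (hmin.1.replace hK (K.erase_subset a) hconn ?_)
  intro L hL hLK
  obtain ⟨x, hx, z, hz, hxz⟩ := hmin.1.2.2 K hK L hL hLK.symm
  by_cases hxa : x = a
  · obtain ⟨y, hy, w, hw, hyw, hya⟩ := h L hL hLK ⟨z, hz, hxa ▸ hxz⟩
    exact ⟨y, Finset.mem_erase.mpr ⟨hya, hy⟩, w, hw, hyw⟩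
  · exact ⟨x, Finset.mem_erase.mpr ⟨hxa, hx⟩, z, hz, hxz⟩

lemma IsMinimalCliqueMinor.exists_adj_only_at_of_dist_eq_diam (hmin : IsMinimalCliqueMinor G 𝒦)
    {K : Finset V} (hK : K ∈ 𝒦) {a b : (K : Set V)} (hab : a ≠ b)
    (hfar : (G.induce (K : Set V)).dist b a = (G.induce (K : Set V)).diam) :
    ∃ L ∈ 𝒦, L ≠ K ∧ (∃ z ∈ L, G.Adj a z) ∧ ∀ x ∈ K, ∀ z ∈ L, G.Adj x z → x = a := by
  have hconn := hmin.1.1 K hK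
  have : Nonempty (K : Set V) := ⟨a⟩
  refine hmin.exists_adj_only_at hK a.2 ?_
  rw [Finset.coe_erase]
  exact SimpleGraph.connected_induce_diff_singleton hconn hab fun x =>
    hfar ▸ SimpleGraph.dist_le_diam (SimpleGraph.connected_iff_ediam_ne_top.mp hconn)

end CliqueMinor

theorem stmt11_general {V : Type*} [DecidableEq V] (G : SimpleGraph V)
    (t : ℕ) (ht : 4 ≤ t) (hG : CgeFree t G) (𝒦 : Finset (Finset V))
    (hmin : IsMinimalCliqueMinor G 𝒦) :
    ∀ K ∈ 𝒦, ∀ u v : (K : Set V), (G.induce (K : Set V)).dist u v + 1 < t := by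
  intro K hK u₀ v₀
  by_contra! hlong
  set H := G.induce (K : Set V)
  have : Nonempty (K : Set V) := ⟨u₀⟩
  obtain ⟨u, v, huv⟩ := H.exists_dist_eq_diam
  have hd : t ≤ H.dist u v + 1 := by
    rw [huv]
    have hfin := H.connected_iff_ediam_ne_top.mp (hmin.1.1 K hK)
    exact hlong.trans (by gcongr; exact H.dist_le_diam hfin)
  have hne : u ≠ v := by
    rintro rfl
    simp only [SimpleGraph.dist_self] at hd
    omega
  obtain ⟨L, hL, hLK, hLu, hLonly⟩ :=
    hmin.exists_adj_only_at_of_dist_eq_diam hK hne (SimpleGraph.dist_comm.trans huv)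
  obtain ⟨M, hM, hMK, hMv, hMonly⟩ := hmin.exists_adj_only_at_of_dist_eq_diam hK hne.symm huv
  have hLM : L ≠ M := by
    rintro rfl
    obtain ⟨z, hz, huz⟩ := hLu
    exact hne (Subtype.ext (hMonly u u.2 z hz huz))
  obtain ⟨z₁, hz₁, z₂, hz₂, hz₁₂⟩ := hmin.1.2.2 L hL M hM hLM
  obtain ⟨n, hn, hcycle⟩ :
      ∃ n, H.dist u v + 2 ≤ n ∧ HasInducedCopy (SimpleGraph.cycleGraph n) G :=
    SimpleGraph.exists_hasInducedCopy_cycleGraph_of_geodesic (R := ↑L ∪ ↑M)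
      (Set.disjoint_union_right.mpr ⟨Finset.disjoint_coe.mpr (hmin.1.2.1 K hK L hL hLK.symm),
        Finset.disjoint_coe.mpr (hmin.1.2.1 K hK M hM hMK.symm)⟩)
      (SimpleGraph.connected_induce_union (hmin.1.1 L hL).preconnected
        (hmin.1.1 M hM).preconnected hz₁ hz₂ hz₁₂)
      (by omega : 2 ≤ H.dist u v)
      (let ⟨z, hz, huz⟩ := hLu; ⟨z, .inl hz, huz⟩) (let ⟨z, hz, hvz⟩ := hMv; ⟨z, .inr hz, hvz⟩)
      (fun x hx z hz hxz => hz.imp (hLonly x hx z · hxz) (hMonly x hx z · hxz))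
  exact hG n (by omega) hcycle

theorem stmt11 {V : Type*} [Fintype V] [DecidableEq V] (G : SimpleGraph V)
    (t : ℕ) (ht : 4 ≤ t) (hG : CgeFree t G) (𝒦 : Finset (Finset V))
    (hmin : IsMinimalCliqueMinor G 𝒦) (hsize : 3 ≤ 𝒦.card) :
    ∀ K ∈ 𝒦, ∀ u v : (K : Set V), (G.induce (K : Set V)).dist u v + 1 < t :=
  stmt11_general G t ht hG 𝒦 hmin
end

section
/- In a minimal clique minor 𝒦 of a graph G, for each branch set K ∈ 𝒦 and each vertex v ∈ K, at least one of the following holds: v is a cutvertex of G[K], or there exists a branch set K' ∈ 𝒦 \ {K} that is adjacent to v but non-adjacent to every vertex of K \ {v}. -/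
theorem stmt12 {V : Type*} [Fintype V] [DecidableEq V] (G : SimpleGraph V)
    (𝒦 : Finset (Finset V)) (hmin : IsMinimalCliqueMinor G 𝒦)
    (K : Finset V) (hK : K ∈ 𝒦) (v : V) (hv : v ∈ K) :
    -- `v` is a cutvertex of `G[K]`, or some other branch set is adjacent to `v`
    -- and non-adjacent to every vertex of `K \ {v}`.
    (¬ (G.induce ((K.erase v : Finset V) : Set V)).Connected) ∨
    (∃ K' ∈ 𝒦, K' ≠ K ∧ (∃ u ∈ K', G.Adj v u) ∧
      ∀ w ∈ K, w ≠ v → ∀ u ∈ K', ¬ G.Adj w u) := by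
  by_contra hcon
  push_neg at hcon
  obtain ⟨hconn, hno⟩ := hcon
  obtain ⟨⟨hc, hd, he⟩, hmin2⟩ := hmin
  -- key edge lemma
  have key : ∀ K' ∈ 𝒦, K' ≠ K → ∃ u ∈ K.erase v, ∃ w ∈ K', G.Adj u w := by
    intro K' hK' hne
    by_cases hadj : ∃ u ∈ K', G.Adj v u
    · obtain ⟨w, hwK, hwv, u, huK', hwu⟩ := hno K' hK' hne hadj
      exact ⟨w, Finset.mem_erase.2 ⟨hwv, hwK⟩, u, huK', hwu⟩
    · push_neg at hadj
      obtain ⟨a, haK, b, hbK', hab⟩ := he K hK K' hK' hne.symm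
      have hav : a ≠ v := by
        rintro rfl
        exact hadj b hbK' hab
      exact ⟨a, Finset.mem_erase.2 ⟨hav, haK⟩, b, hbK', hab⟩
  refine hmin2 K hK (K.erase v) (Finset.erase_ssubset hv) ⟨?_, ?_, ?_⟩
  · intro K₁ h₁
    rcases Finset.mem_insert.1 h₁ with rfl | h₁
    · exact hconn
    · exact hc K₁ (Finset.mem_of_mem_erase h₁)
  · intro K₁ h₁ K₂ h₂ hne
    rcases Finset.mem_insert.1 h₁ with rfl | h₁ <;>
      rcases Finset.mem_insert.1 h₂ with rfl | h₂
    · exact absurd rfl hne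
    · exact Finset.disjoint_of_subset_left (Finset.erase_subset v K)
        (hd K hK K₂ (Finset.mem_of_mem_erase h₂) (Finset.ne_of_mem_erase h₂).symm)
    · exact Finset.disjoint_of_subset_right (Finset.erase_subset v K)
        (hd K₁ (Finset.mem_of_mem_erase h₁) K hK (Finset.ne_of_mem_erase h₁))
    · exact hd K₁ (Finset.mem_of_mem_erase h₁) K₂ (Finset.mem_of_mem_erase h₂) hne
  · intro K₁ h₁ K₂ h₂ hne
    rcases Finset.mem_insert.1 h₁ with rfl | h₁ <;>
      rcases Finset.mem_insert.1 h₂ with rfl | h₂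
    · exact absurd rfl hne
    · exact key K₂ (Finset.mem_of_mem_erase h₂) (Finset.ne_of_mem_erase h₂)
    · obtain ⟨u, hu, w, hw, huw⟩ := key K₁ (Finset.mem_of_mem_erase h₁) (Finset.ne_of_mem_erase h₁)
      exact ⟨w, hw, u, hu, huw.symm⟩
    · exact he K₁ (Finset.mem_of_mem_erase h₁) K₂ (Finset.mem_of_mem_erase h₂) hne
end
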